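/- arXiv:2410.05895 — 8 statements merged into one kernel-verified Lean document; each statement's English description precedes it below -/
import Mathlib

section
/- For every real number t with |t| < 1, the integral (1/π) ∫_{-∞}^{∞} e^{x t} / cosh x dx equals 1 / cos(π t / 2). (This is the moment generating function of the hyperbolic secant random variable.) -/
open Real MeasureTheory Set

private lemma beta_real (a : ℝ) (ha : 0 < a) (ha1 : a < 1) :
    ∫ x in (0:ℝ)..1, x ^ (a - 1) * (1 - x) ^ (-a) = π / Real.sin (π * a) := by
  have hre : 0 < Complex.re (a : ℂ) := by simpa using ha
  have hre2 : 0 < Complex.re (1 - (a : ℂ)) := by simp [Complex.sub_re]; linarith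
  have h1 := Complex.Gamma_mul_Gamma_eq_betaIntegral hre hre2
  rw [add_sub_cancel, Complex.Gamma_one, one_mul] at h1
  rw [Complex.Gamma_mul_Gamma_one_sub] at h1
  -- h1 : ↑π / sin (π a) = betaIntegral a (1-a)
  have h2 : Complex.betaIntegral a (1 - a) =
      ((∫ x in (0:ℝ)..1, x ^ (a - 1) * (1 - x) ^ (-a) : ℝ) : ℂ) := by
    rw [Complex.betaIntegral, ← intervalIntegral.integral_ofReal]
    rw [intervalIntegral.integral_of_le zero_le_one, intervalIntegral.integral_of_le zero_le_one]
    refine setIntegral_congr_fun measurableSet_Ioc fun x hx => ?_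
    have hx0 : (0:ℝ) ≤ x := le_of_lt hx.1
    have hx1 : (0:ℝ) ≤ 1 - x := by linarith [hx.2]
    rw [Complex.ofReal_mul, Complex.ofReal_cpow hx0, Complex.ofReal_cpow hx1]
    push_cast
    ring_nf
  rw [h2] at h1
  have hsin : Complex.sin (π * a) = (Real.sin (π * a) : ℂ) := by
    rw [Complex.ofReal_sin, Complex.ofReal_mul]
  rw [hsin] at h1
  have := h1.symm
  rw [← Complex.ofReal_div] at this
  exact_mod_cast this
lemma logistic_image :
    (fun y : ℝ => Real.exp y / (1 + Real.exp y)) '' univ = Ioo 0 1 := by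
  apply Subset.antisymm
  · rintro _ ⟨y, -, rfl⟩
    have h : 0 < 1 + Real.exp y := by positivity
    constructor
    · positivity
    · rw [div_lt_one h]; linarith [Real.exp_pos y]
  · rintro x ⟨hx0, hx1⟩
    refine ⟨Real.log (x / (1 - x)), mem_univ _, ?_⟩
    have h1 : 0 < 1 - x := by linarith
    have h2 : (0:ℝ) < x / (1 - x) := by positivity
    simp only [Real.exp_log h2]
    field_simp
    ring

lemma logistic_injOn :
    InjOn (fun y : ℝ => Real.exp y / (1 + Real.exp y)) univ := by
  have : StrictMono (fun y : ℝ => Real.exp y / (1 + Real.exp y)) := by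
    have heq : (fun y : ℝ => Real.exp y / (1 + Real.exp y))
        = fun y : ℝ => (1 + Real.exp (-y))⁻¹ := by
      funext y
      rw [Real.exp_neg]
      have h := Real.exp_pos y
      field_simp
      ring
    rw [heq]
    intro x y hxy
    have h1 : (0:ℝ) < 1 + Real.exp (-y) := by positivity
    apply inv_strictAnti₀ h1
    have := Real.exp_lt_exp.2 (neg_lt_neg hxy)
    linarith
  exact this.injective.injOn

lemma logistic_deriv (y : ℝ) :
    HasDerivAt (fun y : ℝ => Real.exp y / (1 + Real.exp y))
      (Real.exp y / (1 + Real.exp y) ^ 2) y := by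
  have h : (1 + Real.exp y) ≠ 0 := by positivity
  have := (Real.hasDerivAt_exp y).div ((hasDerivAt_const y 1).add (Real.hasDerivAt_exp y)) h
  refine HasDerivAt.congr_deriv this ?_
  simp only [Pi.add_apply]
  ring

lemma fermi_dirac (a : ℝ) (ha : 0 < a) (ha1 : a < 1) :
    ∫ y : ℝ, Real.exp (a * y) / (1 + Real.exp y) = π / Real.sin (π * a) := by
  have key := integral_image_eq_integral_abs_deriv_smul MeasurableSet.univ
    (fun y _ => (logistic_deriv y).hasDerivWithinAt) logistic_injOn
    (fun x : ℝ => x ^ (a - 1) * (1 - x) ^ (-a))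
  rw [logistic_image] at key
  have heq : ∀ y : ℝ, |Real.exp y / (1 + Real.exp y) ^ 2| •
      ((Real.exp y / (1 + Real.exp y)) ^ (a - 1) *
        (1 - Real.exp y / (1 + Real.exp y)) ^ (-a))
      = Real.exp (a * y) / (1 + Real.exp y) := by
    intro y
    set E := Real.exp y with hE
    have hE0 : 0 < E := Real.exp_pos y
    have hP : (0:ℝ) < 1 + E := by positivity
    have h1 : 1 - E / (1 + E) = (1 + E)⁻¹ := by field_simp; ring
    have habs : |E / (1 + E) ^ 2| = E / (1 + E) ^ 2 := abs_of_pos (by positivity)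
    have hEpow : E ^ (a - 1) * E = Real.exp (a * y) := by
      rw [Real.rpow_def_of_pos hE0, hE, Real.log_exp, ← Real.exp_add]
      ring_nf
    have hPpow : (1 + E) ^ (a - 1) * (1 + E) ^ (-a) = (1 + E)⁻¹ := by
      rw [← Real.rpow_add hP, show a - 1 + -a = -1 by ring, Real.rpow_neg_one]
    have hPp : (1 + E) ^ a / (1 + E) ^ (a - 1) = 1 + E := by
      rw [← Real.rpow_sub hP, show a - (a - 1) = 1 by ring, Real.rpow_one]
    rw [smul_eq_mul, habs, h1, Real.div_rpow hE0.le hP.le, Real.inv_rpow hP.le,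
      Real.rpow_neg hP.le, inv_inv]
    calc E / (1 + E) ^ 2 * (E ^ (a - 1) / (1 + E) ^ (a - 1) * (1 + E) ^ a)
        = (E ^ (a - 1) * E) * ((1 + E) ^ a / (1 + E) ^ (a - 1)) / (1 + E) ^ 2 := by
          ring
      _ = Real.exp (a * y) / (1 + E) := by
          rw [hEpow, hPp, pow_two]
          rw [mul_comm (1 + E) (1 + E), mul_div_assoc, div_mul_cancel_right₀ hP.ne']
          rw [div_eq_mul_inv]
  have h3 : ∫ x in Ioo (0:ℝ) 1, x ^ (a - 1) * (1 - x) ^ (-a)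
      = ∫ y : ℝ, Real.exp (a * y) / (1 + Real.exp y) := by
    rw [key, Measure.restrict_univ]
    simp only [heq]
  rw [← h3, ← MeasureTheory.integral_Ioc_eq_integral_Ioo,
    ← intervalIntegral.integral_of_le zero_le_one, beta_real a ha ha1]

/-- The moment generating function of the hyperbolic secant random variable:
for `|t| < 1`, `(1/π) ∫ e^{x t} / cosh x dx = 1 / cos (π t / 2)`. -/
theorem mgf_hyperbolic_secant (t : ℝ) (ht : |t| < 1) :
    (1 / π) * ∫ x : ℝ, Real.exp (x * t) / Real.cosh x = 1 / Real.cos (π * t / 2) := by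
  rw [abs_lt] at ht
  have ha : 0 < (1 + t) / 2 := by linarith
  have ha1 : (1 + t) / 2 < 1 := by linarith
  have hcosh : ∀ x : ℝ, Real.exp (x * t) / Real.cosh x
      = 2 * (Real.exp ((1 + t) / 2 * (2 * x)) / (1 + Real.exp (2 * x))) := by
    intro x
    have e1 : Real.exp ((1 + t) / 2 * (2 * x)) = Real.exp (x * t) * Real.exp x := by
      rw [← Real.exp_add]; congr 1; ring
    have e2 : Real.exp (2 * x) = Real.exp x * Real.exp x := by
      rw [← Real.exp_add]; congr 1; ring
    have e3 : Real.exp (-x) = (Real.exp x)⁻¹ := Real.exp_neg x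
    have hex := Real.exp_pos x
    have hc := Real.cosh_pos x
    rw [Real.cosh_eq, e1, e2, e3]
    have h1 : (0:ℝ) < 1 + Real.exp x * Real.exp x := by positivity
    field_simp
    ring
  have hint : ∫ x : ℝ, Real.exp (x * t) / Real.cosh x
      = ∫ y : ℝ, Real.exp ((1 + t) / 2 * y) / (1 + Real.exp y) := by
    simp_rw [hcosh]
    rw [MeasureTheory.integral_const_mul]
    rw [MeasureTheory.Measure.integral_comp_mul_left
      (fun y => Real.exp ((1 + t) / 2 * y) / (1 + Real.exp y)) 2]
    rw [smul_eq_mul, show |((2:ℝ))⁻¹| = 1/2 by norm_num]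
    ring
  rw [hint, fermi_dirac _ ha ha1]
  have hsin : Real.sin (π * ((1 + t) / 2)) = Real.cos (π * t / 2) := by
    rw [show π * ((1 + t) / 2) = π / 2 + π * t / 2 by ring, Real.sin_add,
      Real.sin_pi_div_two, Real.cos_pi_div_two]
    ring
  rw [hsin, div_mul_div_comm, one_mul, div_mul_cancel_left₀ Real.pi_ne_zero, one_div]
end

section
/- For every nonnegative integer n, Σ_{k=0}^{∞} (-1)^k / (2k+1)^{2n+1} = ((-1)^n / 2) (E_{2n} / (2n)!) (π/2)^{2n+1}, where E_m denotes the m-th Euler number. -/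
open Real MeasureTheory Filter

open Finset

lemma diff_iter {f : ℝ → ℝ} (hf : ContDiff ℝ (⊤ : ℕ∞) f) (m : ℕ) : Differentiable ℝ (iteratedDeriv m f) := by
  have h := (contDiff_iff_iteratedDeriv (n := ((m+1 : ℕ) : ℕ∞))).mp (hf.of_le (mod_cast le_top))
  exact h.2 m (by exact_mod_cast Nat.lt_succ_self m)

lemma iteratedDeriv_mul' (f g : ℝ → ℝ) (hf : ContDiff ℝ (⊤ : ℕ∞) f) (hg : ContDiff ℝ (⊤ : ℕ∞) g) (n : ℕ) :
    iteratedDeriv n (fun x => f x * g x) = fun x =>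
      ∑ k ∈ Finset.range (n+1), (n.choose k : ℝ) * iteratedDeriv k f x * iteratedDeriv (n-k) g x := by
  induction n with
  | zero => simp
  | succ n ih =>
    rw [iteratedDeriv_succ, ih]
    funext x
    rw [deriv_fun_sum (fun k hk => by
      exact (((diff_iter hf k).differentiableAt.const_mul _).mul (diff_iter hg (n-k)).differentiableAt))]
    have hterm : ∀ k ∈ Finset.range (n+1),
        deriv (fun x => (n.choose k : ℝ) * iteratedDeriv k f x * iteratedDeriv (n-k) g x) x
        = (n.choose k : ℝ) * (iteratedDeriv (k+1) f x * iteratedDeriv (n-k) g x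
            + iteratedDeriv k f x * iteratedDeriv (n-k+1) g x) := by
      intro k hk
      rw [show (fun x => (n.choose k : ℝ) * iteratedDeriv k f x * iteratedDeriv (n-k) g x)
          = fun x => (n.choose k : ℝ) * (iteratedDeriv k f x * iteratedDeriv (n-k) g x) by
            funext y; ring]
      rw [deriv_const_mul (d := fun y => iteratedDeriv k f y * iteratedDeriv (n-k) g y) _ (((diff_iter hf k).differentiableAt).mul (diff_iter hg (n-k)).differentiableAt)]
      rw [deriv_fun_mul (diff_iter hf k).differentiableAt (diff_iter hg (n-k)).differentiableAt]
      rw [← iteratedDeriv_succ, ← iteratedDeriv_succ]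
    rw [Finset.sum_congr rfl hterm]
    have := Finset.sum_choose_succ_mul
      (fun i j => iteratedDeriv i f x * iteratedDeriv j g x) n
    have e1 : ∑ i ∈ range (n + 1), ((n.choose i : ℝ)) * (iteratedDeriv i f x * iteratedDeriv (n + 1 - i) g x)
        = ∑ i ∈ range (n + 1), ((n.choose i : ℝ)) * (iteratedDeriv i f x * iteratedDeriv (n - i + 1) g x) :=
      Finset.sum_congr rfl fun i hi => by
        rw [show n + 1 - i = n - i + 1 from by have := Finset.mem_range.mp hi; omega]
    rw [e1] at this
    rw [show (∑ k ∈ range (n+1+1), ((n+1).choose k : ℝ) * iteratedDeriv k f x * iteratedDeriv (n+1-k) g x)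
        = ∑ i ∈ range (n+2), ((n+1).choose i : ℝ) * (iteratedDeriv i f x * iteratedDeriv (n+1-i) g x) from
      Finset.sum_congr rfl fun i _ => by ring, this, add_comm]
    simp_rw [mul_add, Finset.sum_add_distrib]
    exact add_comm _ _

noncomputable def ratE (k : ℕ) : ℚ :=
  (((Polynomial.bernoulli (k+1)).eval (3/4 : ℚ) - (Polynomial.bernoulli (k+1)).eval (1/4 : ℚ))
    * 4^(k+1)) / (2*(k+1))

noncomputable def Bser (t : ℚ) : PowerSeries ℚ :=
  PowerSeries.mk fun n => Polynomial.aeval t ((1 / n.factorial : ℚ) • Polynomial.bernoulli n)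

lemma gen4 (t : ℚ) :
    (PowerSeries.rescale (4:ℚ) (Bser t)) * (PowerSeries.rescale 4 (PowerSeries.exp ℚ) - 1)
      = (PowerSeries.C (R := ℚ) 4 * PowerSeries.X) * PowerSeries.rescale (4*t) (PowerSeries.exp ℚ) := by
  have h := congrArg (PowerSeries.rescale (4:ℚ)) (Polynomial.bernoulli_generating_function t)
  rw [map_mul, map_sub, map_one, map_mul] at h
  rw [Bser, h, PowerSeries.rescale_X, PowerSeries.rescale_rescale, mul_comm t 4]

lemma exp_ne_issues : (PowerSeries.rescale (2:ℚ) (PowerSeries.exp ℚ) - 1) ≠ 0 := by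
  intro h
  have := congrArg (PowerSeries.coeff (R := ℚ) 1) h
  simp [PowerSeries.coeff_rescale, PowerSeries.coeff_exp] at this

lemma formal_main :
    (PowerSeries.mk fun k => ratE k / k.factorial) *
      (PowerSeries.exp ℚ + PowerSeries.rescale (-1) (PowerSeries.exp ℚ)) = PowerSeries.C (R := ℚ) 2 := by
  set E1 := PowerSeries.exp ℚ with hE1
  set E2 := PowerSeries.rescale (2:ℚ) E1 with hE2
  set Em := PowerSeries.rescale (-1:ℚ) E1 with hEm
  set G := (PowerSeries.mk fun k => ratE k / k.factorial) with hG
  set D := PowerSeries.rescale (4:ℚ) (Bser (3/4)) - PowerSeries.rescale (4:ℚ) (Bser (1/4)) with hD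
  have h22 : E2 * E2 = PowerSeries.rescale (4:ℚ) E1 := by
    rw [hE2, PowerSeries.exp_mul_exp_eq_exp_add]; norm_num; rfl
  have h12 : (PowerSeries.rescale (1:ℚ) E1) * E2 = PowerSeries.rescale (3:ℚ) E1 := by
    rw [hE2, PowerSeries.exp_mul_exp_eq_exp_add]; norm_num; rfl
  have h1 : PowerSeries.rescale (1:ℚ) E1 = E1 := by rw [PowerSeries.rescale_one]; rfl
  have h2m : E2 * Em = E1 := by
    rw [hE2, hEm, PowerSeries.exp_mul_exp_eq_exp_add]; norm_num [h1]; rfl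
  have h1m : E1 * Em = 1 := by
    nth_rewrite 1 [← h1]
    rw [hEm, PowerSeries.exp_mul_exp_eq_exp_add]
    norm_num [PowerSeries.rescale_zero]
  -- main chain
  have hmain : D * (E2 + 1) * (E2 - 1) = ((PowerSeries.C (R := ℚ) 4 * PowerSeries.X) * E1) * (E2 - 1) := by
    have g3 := gen4 (3/4)
    have g1 := gen4 (1/4)
    norm_num at g3 g1
    calc D * (E2 + 1) * (E2 - 1) = D * (E2 * E2 - 1) := by ring
    _ = (PowerSeries.C (R := ℚ) 4 * PowerSeries.X) * (PowerSeries.rescale (3:ℚ) E1 - PowerSeries.rescale (1:ℚ) E1) := by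
        rw [h22, hD, sub_mul, g3, g1, h1]; ring
    _ = ((PowerSeries.C (R := ℚ) 4 * PowerSeries.X) * E1) * (E2 - 1) := by
        rw [← h12, h1]; ring
  have h5 : D * (E2 + 1) = (PowerSeries.C (R := ℚ) 4 * PowerSeries.X) * E1 :=
    mul_right_cancel₀ exp_ne_issues hmain
  have h6 : D * (E1 + Em) = PowerSeries.C (R := ℚ) 4 * PowerSeries.X := by
    have := congrArg (· * Em) h5
    calc D * (E1 + Em) = D * (E2 + 1) * Em := by rw [mul_assoc, add_mul, one_mul, h2m]
    _ = (PowerSeries.C (R := ℚ) 4 * PowerSeries.X) * E1 * Em := by rw [h5]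
    _ = PowerSeries.C (R := ℚ) 4 * PowerSeries.X := by rw [mul_assoc, h1m, mul_one]
  have h7 : D = (PowerSeries.C (R := ℚ) 2 * PowerSeries.X) * G := by
    ext n
    cases n with
    | zero =>
      rw [hD, hG, map_sub, PowerSeries.coeff_rescale, PowerSeries.coeff_rescale]
      simp only [Bser, PowerSeries.coeff_mk, Polynomial.bernoulli_zero]
      rw [PowerSeries.coeff_zero_eq_constantCoeff_apply, map_mul, map_mul,
        PowerSeries.constantCoeff_X]
      simp
    | succ n =>
      rw [hD, hG, map_sub, PowerSeries.coeff_rescale, PowerSeries.coeff_rescale, mul_assoc,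
        PowerSeries.coeff_C_mul, PowerSeries.coeff_succ_X_mul]
      simp only [Bser, PowerSeries.coeff_mk, _root_.map_smul, smul_eq_mul, Polynomial.coe_aeval_eq_eval]
      rw [ratE]
      have hf : ((n+1).factorial : ℚ) = (n+1) * n.factorial := by
        rw [Nat.factorial_succ]; push_cast; ring
      have h0 : ((n:ℚ)+1) ≠ 0 := by positivity
      have h0' : (n.factorial : ℚ) ≠ 0 := Nat.cast_ne_zero.mpr (Nat.factorial_ne_zero n)
      field_simp
      rw [hf]
      ring
  rw [h7] at h6
  have hfin : (PowerSeries.C (R := ℚ) 2 * PowerSeries.X) * (G * (E1 + Em) - PowerSeries.C (R := ℚ) 2) = 0 := by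
    have e : PowerSeries.C (R := ℚ) 2 * PowerSeries.X * (G * (E1 + Em) - PowerSeries.C (R := ℚ) 2)
        = (PowerSeries.C (R := ℚ) 2 * PowerSeries.X * G) * (E1 + Em)
          - PowerSeries.C (R := ℚ) 2 * PowerSeries.X * PowerSeries.C (R := ℚ) 2 := by ring
    rw [e, h6, show (PowerSeries.C (R := ℚ) 2 * PowerSeries.X * PowerSeries.C (R := ℚ) 2)
        = PowerSeries.C (R := ℚ) 4 * PowerSeries.X from by
      rw [show (4:ℚ) = 2*2 by norm_num, map_mul]; ring, sub_self]
  have hC2X : (PowerSeries.C (R := ℚ) 2 * PowerSeries.X) ≠ 0 := by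
    intro h
    have := congrArg (PowerSeries.coeff (R := ℚ) 1) h
    simp at this
  have := (mul_eq_zero.mp hfin).resolve_left hC2X
  have := sub_eq_zero.mp this
  exact this

lemma ratE_rec (n : ℕ) :
    ∑ k ∈ Finset.range (n+1), (n.choose k : ℚ) * ratE k * (if Even (n-k) then 1 else 0)
      = if n = 0 then 1 else 0 := by
  have h := congrArg (PowerSeries.coeff (R := ℚ) n) formal_main
  rw [PowerSeries.coeff_mul, PowerSeries.coeff_C,
    Finset.Nat.sum_antidiagonal_eq_sum_range_succ_mk] at h
  have hterm : ∀ k ∈ Finset.range (n+1),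
      (PowerSeries.coeff (R := ℚ) k) (PowerSeries.mk fun j => ratE j / j.factorial)
        * (PowerSeries.coeff (R := ℚ) (n-k)) (PowerSeries.exp ℚ + PowerSeries.rescale (-1) (PowerSeries.exp ℚ))
      = ratE k / k.factorial * ((1 + (-1:ℚ)^(n-k)) / (n-k).factorial) := by
    intro k _
    rw [PowerSeries.coeff_mk, map_add, PowerSeries.coeff_rescale, PowerSeries.coeff_exp]
    simp only [Algebra.algebraMap_self, RingHom.id_apply]
    ring
  rw [Finset.sum_congr rfl hterm] at h
  have goal_eq : ∀ k ∈ Finset.range (n+1),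
      (n.choose k : ℚ) * ratE k * (if Even (n-k) then 1 else 0)
        = (n.factorial : ℚ)/2 * (ratE k / k.factorial * ((1 + (-1:ℚ)^(n-k)) / (n-k).factorial)) := by
    intro k hk
    have hk' : k ≤ n := Nat.lt_succ_iff.mp (Finset.mem_range.mp hk)
    rw [Nat.cast_choose ℚ hk']
    have e : (1 + (-1:ℚ)^(n-k)) = if Even (n-k) then 2 else 0 := by
      by_cases hpar : Even (n-k)
      · simp [hpar, hpar.neg_one_pow]; norm_num
      · simp [hpar, (Nat.not_even_iff_odd.mp hpar).neg_one_pow]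
    rw [e]
    have hfk : ((k.factorial : ℚ)) ≠ 0 := Nat.cast_ne_zero.mpr (Nat.factorial_ne_zero _)
    have hfnk : (((n-k).factorial : ℚ)) ≠ 0 := Nat.cast_ne_zero.mpr (Nat.factorial_ne_zero _)
    by_cases hpar : Even (n-k)
    · simp only [if_pos hpar]; field_simp
    · simp only [if_neg hpar]; ring
  rw [Finset.sum_congr rfl goal_eq, ← Finset.mul_sum, h]
  by_cases hn : n = 0
  · simp [hn, Nat.factorial]
  · simp [hn]

/-- The `n`-th Euler number, defined as the `n`-th iterated derivative at `0` of
`x ↦ sech x = 1 / cosh x`, i.e. via `sech x = ∑ E_n xⁿ/n!`. -/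
noncomputable def eulerNumber (n : ℕ) : ℝ :=
  iteratedDeriv n (fun x : ℝ => 1 / Real.cosh x) 0

lemma iteratedDeriv_cosh' (n : ℕ) :
    iteratedDeriv n Real.cosh = if Even n then Real.cosh else Real.sinh := by
  induction n with
  | zero => simp
  | succ n ih =>
    rw [iteratedDeriv_succ, ih]
    by_cases h : Even n
    · simp [h, Nat.even_add_one, Real.deriv_cosh]
    · simp [h, Nat.even_add_one, Real.deriv_sinh]

lemma contDiff_sech : ContDiff ℝ (⊤ : ℕ∞) (fun x : ℝ => 1 / Real.cosh x) :=
  contDiff_const.div Real.contDiff_cosh (fun x => (Real.cosh_pos x).ne')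

lemma euler_rec (n : ℕ) :
    ∑ k ∈ Finset.range (n+1), (n.choose k : ℝ) * eulerNumber k * (if Even (n-k) then 1 else 0)
      = if n = 0 then 1 else 0 := by
  have key : iteratedDeriv n (fun x : ℝ => (1 / Real.cosh x) * Real.cosh x) 0
      = ∑ k ∈ Finset.range (n+1), (n.choose k : ℝ) * eulerNumber k * (if Even (n-k) then 1 else 0) := by
    rw [iteratedDeriv_mul' _ _ contDiff_sech Real.contDiff_cosh]
    refine Finset.sum_congr rfl fun k hk => ?_
    rw [iteratedDeriv_cosh']
    unfold eulerNumber
    by_cases h : Even (n - k) <;> simp [h, Real.cosh_zero, Real.sinh_zero]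
  rw [← key, show (fun x : ℝ => (1 / Real.cosh x) * Real.cosh x) = fun _ : ℝ => (1:ℝ) from
    funext fun x => one_div_mul_cancel (Real.cosh_pos x).ne']
  cases n with
  | zero => simp
  | succ n =>
    rw [iteratedDeriv_succ', if_neg (Nat.succ_ne_zero n)]
    have : deriv (fun _ : ℝ => (1:ℝ)) = fun _ : ℝ => (0:ℝ) := by funext x; simp
    rw [this]
    have hz : ∀ m : ℕ, iteratedDeriv m (fun _ : ℝ => (0:ℝ)) = fun _ => (0:ℝ) := by
      intro m; induction m with
      | zero => simp
      | succ m ih => rw [iteratedDeriv_succ, ih]; funext x; simp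
    rw [hz]

lemma eulerNumber_eq_ratE (n : ℕ) : eulerNumber n = (ratE n : ℝ) := by
  induction n using Nat.strong_induction_on with
  | _ n ih =>
    have h1 := euler_rec n
    have h2' : ∑ k ∈ Finset.range (n+1), (n.choose k : ℝ) * (ratE k : ℝ) * (if Even (n-k) then 1 else 0)
        = if n = 0 then 1 else 0 := by
      have h2 : ((∑ k ∈ Finset.range (n+1), (n.choose k:ℚ) * ratE k * (if Even (n-k) then 1 else 0) : ℚ) : ℝ)
          = ((if n = 0 then (1:ℚ) else 0 : ℚ) : ℝ) := by rw [ratE_rec n]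
      simp only [Rat.cast_sum, Rat.cast_mul, Rat.cast_natCast,
        apply_ite (fun q : ℚ => (q : ℝ)), Rat.cast_one, Rat.cast_zero] at h2
      exact h2
    rw [Finset.sum_range_succ] at h1 h2'
    simp only [Nat.choose_self, Nat.cast_one, one_mul, Nat.sub_self, Even.zero, if_pos,
      mul_one] at h1 h2'
    have hsum : ∑ k ∈ Finset.range n, (n.choose k : ℝ) * eulerNumber k * (if Even (n-k) then 1 else 0)
        = ∑ k ∈ Finset.range n, (n.choose k : ℝ) * (ratE k : ℝ) * (if Even (n-k) then 1 else 0) :=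
      Finset.sum_congr rfl fun k hk => by rw [ih k (Finset.mem_range.mp hk)]
    have h3 := h1.trans h2'.symm
    rw [hsum] at h3
    linarith

/-- `∑_{k=0}^∞ (-1)^k/(2k+1)^{2n+1} = ((-1)^n/2) (E_{2n}/(2n)!) (π/2)^{2n+1}`, where the
series is interpreted as the limit of its partial sums (it converges only conditionally
for `n = 0`). -/
theorem alternating_odd_power_sum (n : ℕ) :
    Tendsto (fun N : ℕ => ∑ k ∈ Finset.range N, (-1 : ℝ) ^ k / (2 * k + 1) ^ (2 * n + 1))
      atTop
      (nhds ((-1) ^ n / 2 * (eulerNumber (2 * n) / (Nat.factorial (2 * n) : ℝ)) * (π / 2) ^ (2 * n + 1))) := by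
  rcases Nat.eq_zero_or_pos n with hn | hn
  · subst hn
    have hE0 : eulerNumber 0 = 1 := by
      simp [eulerNumber, iteratedDeriv_zero, Real.cosh_zero]
    rw [hE0]
    have heq : (fun N : ℕ => ∑ k ∈ Finset.range N, (-1 : ℝ) ^ k / (2 * k + 1) ^ (2 * 0 + 1))
        = fun N : ℕ => ∑ k ∈ Finset.range N, (-1 : ℝ) ^ k / (2 * k + 1) := by
      funext N; exact Finset.sum_congr rfl fun k _ => by norm_num
    rw [heq, show ((-1:ℝ))^0/2 * ((1:ℝ)/(Nat.factorial (2*0):ℝ)) * (π/2)^(2*0+1) = π/4 by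
      norm_num [Nat.factorial]; ring]
    exact Real.tendsto_sum_pi_div_four
  · -- n ≥ 1
    set P₁ : ℝ := (((Polynomial.bernoulli (2*n+1)).eval (1/4 : ℚ) : ℚ) : ℝ) with hP₁
    set P₃ : ℝ := (((Polynomial.bernoulli (2*n+1)).eval (3/4 : ℚ) : ℚ) : ℝ) with hP₃
    have hmap : ∀ q : ℚ, ((Polynomial.bernoulli (2*n+1)).map (algebraMap ℚ ℝ)).eval ((q:ℝ)) =
        (((Polynomial.bernoulli (2*n+1)).eval q : ℚ) : ℝ) := by
      intro q
      rw [show ((q:ℝ)) = algebraMap ℚ ℝ q from by norm_num,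
        Polynomial.eval_map, Polynomial.eval₂_at_apply, eq_ratCast]
    have h₁ := hasSum_one_div_nat_pow_mul_sin (k := n) hn.ne' (x := (1/4 : ℝ))
      ⟨by norm_num, by norm_num⟩
    have h₃ := hasSum_one_div_nat_pow_mul_sin (k := n) hn.ne' (x := (3/4 : ℝ))
      ⟨by norm_num, by norm_num⟩
    rw [show ((1:ℝ)/4) = ((1/4 : ℚ) : ℝ) from by norm_num, hmap] at h₁
    rw [show ((3:ℝ)/4) = ((3/4 : ℚ) : ℝ) from by norm_num, hmap] at h₃
    set c : ℝ := (-1 : ℝ) ^ (n + 1) * (2 * π) ^ (2 * n + 1) / 2 / (Nat.factorial (2 * n + 1) : ℝ) with hc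
    -- S₃ = - S₁
    have hneg : ∀ m : ℕ, (1:ℝ) / (m : ℝ) ^ (2 * n + 1) * Real.sin (2 * π * m * ((3/4 : ℚ) : ℝ))
        = -((1:ℝ) / (m : ℝ) ^ (2 * n + 1) * Real.sin (2 * π * m * ((1/4 : ℚ) : ℝ))) := by
      intro m
      rw [show (2 * π * m * ((3/4 : ℚ) : ℝ)) = m * (2*π) - 2 * π * m * ((1/4 : ℚ) : ℝ) from by
        push_cast; ring]
      have hs : Real.sin ((m:ℝ)*(2*π)) = 0 := by
        rw [show ((m:ℝ))*(2*π) = ((2*m : ℕ):ℝ)*π from by push_cast; ring]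
        exact Real.sin_nat_mul_pi _
      rw [Real.sin_sub, hs, Real.cos_nat_mul_two_pi]
      ring
    have h₃' : HasSum (fun m : ℕ => -((1:ℝ) / (m : ℝ) ^ (2 * n + 1)
        * Real.sin (2 * π * m * ((1/4 : ℚ) : ℝ)))) (c * P₃) := by
      refine HasSum.congr_fun h₃ fun m => ?_
      exact (hneg m).symm
    have hP3eq : c * P₃ = -(c * P₁) := h₃'.unique h₁.neg
    have hcne : c ≠ 0 := by
      rw [hc]
      apply div_ne_zero (div_ne_zero (mul_ne_zero (by positivity) (by positivity)) two_ne_zero)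
      exact_mod_cast (Nat.factorial_ne_zero _)
    have hP3 : P₃ = -P₁ := mul_left_cancel₀ hcne (by rw [hP3eq]; ring)
    have hinj : Function.Injective (fun j : ℕ => 2*j+1) := fun a b h => by
      simpa using h
    have hvan : ∀ m, m ∉ Set.range (fun j : ℕ => 2*j+1) →
        (1:ℝ)/(m:ℝ)^(2*n+1) * Real.sin (2*π*m*((1/4:ℚ):ℝ)) = 0 := by
      intro m hm
      have hev : Even m := by
        rcases Nat.even_or_odd m with h | h
        · exact h
        · obtain ⟨j, hj⟩ := h
          exact absurd ⟨j, hj.symm⟩ hm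
      obtain ⟨l, hl⟩ := hev
      have : Real.sin (2*π*(m:ℝ)*((1/4:ℚ):ℝ)) = 0 := by
        rw [show (2*π*(m:ℝ)*((1/4:ℚ):ℝ)) = (l:ℝ)*π from by rw [hl]; push_cast; ring]
        exact Real.sin_nat_mul_pi _
      rw [this, mul_zero]
    have h₁' := (Function.Injective.hasSum_iff hinj hvan).mpr h₁
    have hterm : ∀ j : ℕ, ((fun m : ℕ => (1:ℝ)/(m:ℝ)^(2*n+1) * Real.sin (2*π*m*((1/4:ℚ):ℝ)))
        ∘ (fun j : ℕ => 2*j+1)) j = (-1:ℝ)^j / (2*(j:ℝ)+1)^(2*n+1) := by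
      intro j
      have hcos : Real.cos ((j:ℝ)*π) = (-1:ℝ)^j := by
        have := Real.cos_nat_mul_pi_sub 0 j
        simpa using this
      have hsin : Real.sin (2*π*((2*j+1 : ℕ):ℝ)*((1/4:ℚ):ℝ)) = (-1:ℝ)^j := by
        rw [show (2*π*((2*j+1:ℕ):ℝ)*((1/4:ℚ):ℝ)) = (j:ℝ)*π + π/2 from by push_cast; ring]
        rw [Real.sin_add, Real.sin_nat_mul_pi, Real.sin_pi_div_two, Real.cos_pi_div_two, hcos]
        ring
      simp only [Function.comp_apply]
      rw [hsin]
      push_cast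
      ring
    have h₁'' : HasSum (fun j : ℕ => (-1:ℝ)^j / (2*(j:ℝ)+1)^(2*n+1)) (c * P₁) :=
      h₁'.congr_fun fun j => (hterm j).symm
    have hval : c * P₁ = (-1) ^ n / 2 * (eulerNumber (2 * n) / (Nat.factorial (2 * n) : ℝ))
        * (π / 2) ^ (2 * n + 1) := by
      rw [eulerNumber_eq_ratE, ratE]
      push_cast
      rw [← hP₁, ← hP₃, hP3, hc]
      have hfac : ((2*n+1).factorial : ℝ) = (2*(n:ℝ)+1) * ((2*n).factorial : ℝ) := by
        rw [show 2*n+1 = (2*n)+1 from rfl, Nat.factorial_succ]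
        push_cast; ring
      have hf1 : ((2*n).factorial : ℝ) ≠ 0 := by exact_mod_cast Nat.factorial_ne_zero _
      have hpow : (2*π)^(2*n+1) = 4^(2*n+1) * (π/2)^(2*n+1) := by
        rw [← mul_pow]; ring_nf
      rw [hfac, hpow, pow_succ (-1:ℝ) n]
      have h2n1 : (2*(n:ℝ)+1) ≠ 0 := by positivity
      field_simp
      ring
    rw [← hval]
    exact h₁''.tendsto_sum_nat
end

section
/- Σ_{k=0}^{∞} (-1)^k / (2k+1)^3 = π^3 / 32. -/
open Real

/-- `∑_{k=0}^∞ (-1)^k/(2k+1)^3 = π³/32`. -/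
theorem alternating_sum_cubes : ∑' k : ℕ, (-1 : ℝ) ^ k / (2 * k + 1) ^ 3 = π ^ 3 / 32 := by
  have h := hasSum_L_function_mod_four_eval_three
  have hinj : Function.Injective (fun k : ℕ => 2 * k + 1) := fun a b hab => by simp only at hab; omega
  have h2 : HasSum (fun k : ℕ => (1 : ℝ) / ((2 * k + 1 : ℕ) : ℝ) ^ 3 *
      Real.sin (π * ((2 * k + 1 : ℕ) : ℝ) / 2)) (π ^ 3 / 32) := by
    apply (Function.Injective.hasSum_iff hinj ?_).2 h
    intro n hn
    simp only [Set.mem_range, not_exists] at hn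
    obtain ⟨m, rfl⟩ : ∃ m, n = 2 * m := by
      rcases Nat.even_or_odd n with ⟨m, hm⟩ | ⟨m, hm⟩
      · exact ⟨m, by omega⟩
      · exact absurd (hn m) (by omega)
    have : Real.sin (π * (2 * (m : ℝ)) / 2) = 0 := by
      rw [(by ring : π * (2 * ↑m) / 2 = ↑m * π)]
      exact Real.sin_int_mul_pi m
    simp [this]
  have heq : ∀ k : ℕ, (1 : ℝ) / ((2 * k + 1 : ℕ) : ℝ) ^ 3 *
      Real.sin (π * ((2 * k + 1 : ℕ) : ℝ) / 2) = (-1 : ℝ) ^ k / (2 * k + 1) ^ 3 := by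
    intro k
    have hs : Real.sin (π * ((2 * k + 1 : ℕ) : ℝ) / 2) = (-1 : ℝ) ^ k := by
      push_cast
      have hc : Real.cos (k * π) = (-1) ^ k := by
        simpa using Real.cos_nat_mul_pi_sub 0 k
      rw [(by ring : π * (2 * ↑k + 1) / 2 = ↑k * π + π / 2), Real.sin_add, Real.sin_pi_div_two,
        Real.cos_pi_div_two, hc]
      ring
    rw [hs]
    push_cast
    ring
  rw [← (h2.tsum_eq)]
  exact tsum_congr fun k => (heq k).symm
end

section
/- For every real number x with |x| < π/2, sec x = Σ_{n=0}^{∞} ((-1)^n E_{2n} / (2n)!) x^{2n}, where E_m denotes the m-th Euler number; that is, the series Σ_{n=0}^{∞} ((-1)^n E_{2n} / (2n)!) x^{2n} has sum 1/cos x. -/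
open Real

lemma csech_cosh_ne (z : ℂ) (hz : ‖z‖ < π / 2) : Complex.cosh z ≠ 0 := by
  intro h
  rw [← Complex.cos_mul_I, Complex.cos_eq_zero_iff] at h
  obtain ⟨k, hk⟩ := h
  have : ‖z * Complex.I‖ = ‖z‖ := by simp
  rw [hk] at this
  have h1 : ‖((2 * (k : ℂ) + 1) * (π : ℂ) / 2)‖ = |(2 * (k : ℝ) + 1)| * π / 2 := by
    have : ((2 * (k : ℂ) + 1) * (π : ℂ) / 2) = (((2 * (k : ℝ) + 1) * π / 2 : ℝ) : ℂ) := by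
      push_cast; ring
    rw [this, Complex.norm_real, Real.norm_eq_abs, abs_div, abs_mul,
      abs_of_pos Real.pi_pos]
    norm_num
  have h2 : (1 : ℝ) ≤ |(2 * (k : ℝ) + 1)| := by
    rcases le_or_gt 0 (k : ℝ) with h | h
    · rw [abs_of_pos (by linarith)]; linarith
    · have : (k : ℝ) ≤ -1 := by exact_mod_cast Int.le_of_lt_add_one (by exact_mod_cast h)
      rw [abs_of_neg (by linarith)]; linarith
  have : π / 2 ≤ ‖z‖ := by
    rw [← this, h1]
    nlinarith [Real.pi_pos]
  linarith

lemma csech_analytic : AnalyticOnNhd ℂ (fun z : ℂ => 1 / Complex.cosh z)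
    {z : ℂ | Complex.cosh z ≠ 0} := by
  intro z hz
  exact analyticAt_const.div
    (Complex.differentiable_cosh.differentiableOn.analyticOnNhd isOpen_univ z (Set.mem_univ z)) hz

lemma iteratedDeriv_csech_real (n : ℕ) (x : ℝ) :
    iteratedDeriv n (fun z : ℂ => 1 / Complex.cosh z) (x : ℂ)
      = ((iteratedDeriv n (fun t : ℝ => 1 / Real.cosh t) x : ℝ) : ℂ) := by
  induction n generalizing x with
  | zero => simp [Complex.ofReal_cosh]
  | succ n ih =>
    set F := iteratedDeriv n (fun z : ℂ => 1 / Complex.cosh z)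
    set G := iteratedDeriv n (fun t : ℝ => 1 / Real.cosh t)
    have hFanal : AnalyticOnNhd ℂ F {z : ℂ | Complex.cosh z ≠ 0} := by
      have := csech_analytic.iterated_deriv n
      rwa [show F = deriv^[n] (fun z : ℂ => 1 / Complex.cosh z) from
        iteratedDeriv_eq_iterate]
    have hmem : (x : ℂ) ∈ {z : ℂ | Complex.cosh z ≠ 0} := by
      simp only [Set.mem_setOf_eq, ← Complex.ofReal_cosh, Complex.ofReal_ne_zero]
      exact (Real.cosh_pos x).ne'
    have hd : HasDerivAt F (deriv F (x : ℂ)) (x : ℂ) :=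
      ((hFanal _ hmem).differentiableAt).hasDerivAt
    set d := deriv F (x : ℂ)
    have h1 : HasDerivAt (fun t : ℝ => F (t : ℂ)) d x := hd.comp_ofReal
    have h1' : HasDerivAt (fun t : ℝ => ((G t : ℝ) : ℂ)) d x := by
      have : (fun t : ℝ => F (t : ℂ)) = fun t : ℝ => ((G t : ℝ) : ℂ) := by
        funext t; exact ih t
      rwa [this] at h1
    have hre : HasDerivAt G d.re x := by
      have := Complex.reCLM.hasFDerivAt.comp_hasDerivAt x h1'
      simpa [Function.comp_def] using this
    have him : d.im = 0 := by
      have h2 := Complex.imCLM.hasFDerivAt.comp_hasDerivAt x h1'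
      have h3 : HasDerivAt (fun _ : ℝ => (0 : ℝ)) d.im x := by simpa [Function.comp_def] using h2
      have := h3.deriv
      simpa using this.symm.trans (deriv_const x 0)
    have hdeq : d = ((d.re : ℝ) : ℂ) := Complex.ext rfl (by simp [him])
    rw [iteratedDeriv_succ, iteratedDeriv_succ]
    rw [show deriv F (x : ℂ) = d from rfl, hdeq, hre.deriv]

/-- For `|x| < π/2`, `sec x = ∑_{n=0}^∞ ((-1)^n E_{2n}/(2n)!) x^{2n}`. -/
theorem sec_eq_euler_series (x : ℝ) (hx : |x| < π / 2) :
    HasSum (fun n : ℕ => (-1) ^ n * eulerNumber (2 * n) / (Nat.factorial (2 * n) : ℝ) * x ^ (2 * n))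
      (1 / Real.cos x) := by
  set f : ℂ → ℂ := fun z => 1 / Complex.cosh z with hf_def
  have hdiff : DifferentiableOn ℂ f (Metric.ball (0 : ℂ) (π / 2)) := by
    intro z hz
    have hz' : ‖z‖ < π / 2 := by simpa [Metric.mem_ball] using hz
    exact ((csech_analytic z (csech_cosh_ne z hz')).differentiableAt).differentiableWithinAt
  have hmem : (x : ℂ) * Complex.I ∈ Metric.ball (0 : ℂ) (π / 2) := by
    simpa [Metric.mem_ball, Complex.norm_real] using hx
  have hmem' : -((x : ℂ) * Complex.I) ∈ Metric.ball (0 : ℂ) (π / 2) := by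
    simpa [Metric.mem_ball, Complex.norm_real] using hx
  have H1 := Complex.hasSum_taylorSeries_on_ball hdiff hmem
  have H2 := Complex.hasSum_taylorSeries_on_ball hdiff hmem'
  have hfval : f ((x : ℂ) * Complex.I) = ((1 / Real.cos x : ℝ) : ℂ) := by
    simp [hf_def, Complex.cosh_mul_I, Complex.ofReal_cos]
  have hfval' : f (-((x : ℂ) * Complex.I)) = ((1 / Real.cos x : ℝ) : ℂ) := by
    simp only [hf_def, Complex.cosh_neg]
    simp [Complex.cosh_mul_I, Complex.ofReal_cos]
  rw [sub_zero] at H1 H2  -- z - 0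
  rw [hfval] at H1
  rw [hfval'] at H2
  have Havg := (H1.add H2).div_const 2
  have hterm : ∀ n : ℕ,
      ((n.factorial : ℂ)⁻¹ • ((x : ℂ) * Complex.I) ^ n • iteratedDeriv n f 0
        + (n.factorial : ℂ)⁻¹ • (-((x : ℂ) * Complex.I)) ^ n • iteratedDeriv n f 0) / 2
      = (n.factorial : ℂ)⁻¹ * (((x : ℂ) * Complex.I) ^ n + (-((x : ℂ) * Complex.I)) ^ n) / 2
          * iteratedDeriv n f 0 := by
    intro n; simp only [smul_eq_mul]; ring
  have hsum2 : (((1 / Real.cos x : ℝ) : ℂ) + ((1 / Real.cos x : ℝ) : ℂ)) / 2 = ((1 / Real.cos x : ℝ) : ℂ) := by ring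
  rw [hsum2] at Havg
  set T : ℕ → ℂ := fun n =>
    ((n.factorial : ℂ)⁻¹ • ((x : ℂ) * Complex.I) ^ n • iteratedDeriv n f 0
      + (n.factorial : ℂ)⁻¹ • (-((x : ℂ) * Complex.I)) ^ n • iteratedDeriv n f 0) / 2 with hT
  have hinj : Function.Injective (fun n : ℕ => 2 * n) := fun a b h => by simp only at h; omega
  have hzero : ∀ m ∉ Set.range (fun n : ℕ => 2 * n), T m = 0 := by
    intro m hm
    have hodd : Odd m := by
      rcases Nat.even_or_odd m with he | ho
      · obtain ⟨k, hk⟩ := he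
        exact absurd ⟨m / 2, by simp only; omega⟩ hm
      · exact ho
    have : (-((x : ℂ) * Complex.I)) ^ m = -(((x : ℂ) * Complex.I) ^ m) := hodd.neg_pow _
    simp only [hT, this, smul_eq_mul]
    ring
  have Heven : HasSum (T ∘ fun n : ℕ => 2 * n) ((1 / Real.cos x : ℝ) : ℂ) :=
    (hinj.hasSum_iff hzero).mpr Havg
  have hkey : ∀ n : ℕ, (T ∘ fun n : ℕ => 2 * n) n
      = (((-1) ^ n * eulerNumber (2 * n) / (Nat.factorial (2 * n) : ℝ) * x ^ (2 * n) : ℝ) : ℂ) := by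
    intro n
    have hE : iteratedDeriv (2 * n) f 0 = ((eulerNumber (2 * n) : ℝ) : ℂ) := by
      have h0 := iteratedDeriv_csech_real (2 * n) 0
      rw [Complex.ofReal_zero] at h0
      rw [hf_def]
      exact h0
    have hpow : ((x : ℂ) * Complex.I) ^ (2 * n) = ((-1 : ℂ)) ^ n * (x : ℂ) ^ (2 * n) := by
      rw [mul_pow, pow_mul, pow_mul, Complex.I_sq]
      ring
    have hpow' : (-((x : ℂ) * Complex.I)) ^ (2 * n) = ((-1 : ℂ)) ^ n * (x : ℂ) ^ (2 * n) := by
      rw [(Even.neg_pow ⟨n, by ring⟩ _), hpow]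
    simp only [Function.comp, hT, hE, hpow, hpow', smul_eq_mul]
    push_cast
    have hfac : ((2 * n).factorial : ℂ) ≠ 0 := by
      exact_mod_cast Nat.factorial_ne_zero (2 * n)
    field_simp
    ring
  rw [funext hkey] at Heven
  exact (Complex.hasSum_ofReal).mp Heven
end

section
/- For every nonzero real number a, ∫_{-∞}^{∞} (1/π²) (1/cosh y) (1/cosh(a - y)) dy = 4a / (π² (e^a - e^{-a})). (This is the probability density function of the sum of two independent hyperbolic secant random variables.) -/
open Real MeasureTheory Set Filter Topology

/-- `exp |y| ≤ 2 * cosh y`. -/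
lemma aux_exp_abs_le_two_cosh (y : ℝ) : Real.exp |y| ≤ 2 * Real.cosh y := by
  rw [Real.cosh_eq]
  rcases abs_cases y with ⟨h, _⟩ | ⟨h, _⟩ <;> rw [h] <;>
    nlinarith [Real.exp_pos y, Real.exp_pos (-y)]

lemma aux_integrable_exp_neg_abs : Integrable (fun y : ℝ => Real.exp (-|y|)) := by
  rw [← integrableOn_univ, ← Set.Iic_union_Ioi (a := (0:ℝ)), integrableOn_union]
  constructor
  · refine (integrableOn_exp_Iic 0).congr_fun (fun y hy => ?_) measurableSet_Iic
    rw [abs_of_nonpos (by exact hy), neg_neg]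
  · refine ((exp_neg_integrableOn_Ioi 0 (one_pos)).congr_fun (fun y hy => ?_)
      measurableSet_Ioi)
    rw [abs_of_pos hy]; simp only [neg_mul, one_mul]

lemma aux_integrable_sech_mul (a : ℝ) :
    Integrable (fun y : ℝ => (Real.cosh y)⁻¹ * (Real.cosh (y - a))⁻¹) := by
  have hcont : Continuous fun y : ℝ => (Real.cosh y)⁻¹ * (Real.cosh (y - a))⁻¹ :=
    (Real.continuous_cosh.inv₀ (fun x => (Real.cosh_pos x).ne')).mul
      ((Real.continuous_cosh.comp (continuous_id.sub continuous_const)).inv₀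
        (fun x => (Real.cosh_pos (x - a)).ne'))
  refine (aux_integrable_exp_neg_abs.const_mul 2).mono' hcont.aestronglyMeasurable
    (Filter.Eventually.of_forall fun y => ?_)
  have h1 : (Real.cosh y)⁻¹ ≤ 2 * Real.exp (-|y|) := by
    have hc := Real.cosh_pos y
    have he := Real.exp_pos |y|
    rw [Real.exp_neg, ← div_eq_mul_inv, le_div_iff₀ he, inv_mul_eq_div, div_le_iff₀ hc]
    linarith [aux_exp_abs_le_two_cosh y]
  have h2 : (Real.cosh (y - a))⁻¹ ≤ 1 := inv_le_one_of_one_le₀ (Real.one_le_cosh _)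
  have hpos1 : (0:ℝ) < (Real.cosh y)⁻¹ := inv_pos.mpr (Real.cosh_pos y)
  have hpos2 : (0:ℝ) < (Real.cosh (y - a))⁻¹ := inv_pos.mpr (Real.cosh_pos _)
  rw [Real.norm_eq_abs, abs_of_pos (mul_pos hpos1 hpos2)]
  calc (Real.cosh y)⁻¹ * (Real.cosh (y - a))⁻¹ ≤ (2 * Real.exp (-|y|)) * 1 :=
        mul_le_mul h1 h2 hpos2.le (by positivity)
    _ = 2 * Real.exp (-|y|) := by ring

lemma aux_tendsto_top (a : ℝ) :
    Tendsto (fun y : ℝ => Real.log (Real.cosh y) - Real.log (Real.cosh (y - a)))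
      atTop (𝓝 a) := by
  have key : Tendsto (fun y : ℝ => Real.log (Real.cosh y) - y) atTop (𝓝 (-Real.log 2)) := by
    have h : ∀ y : ℝ, Real.log (Real.cosh y) - y = Real.log ((1 + Real.exp (-2 * y)) / 2) := by
      intro y
      rw [Real.cosh_eq, eq_comm]
      have e1 : Real.exp y * Real.exp (-y) = 1 := by rw [← Real.exp_add]; simp
      have e2 : Real.exp (-y) * Real.exp (-y) = Real.exp (-2 * y) := by
        rw [← Real.exp_add]; ring_nf
      rw [show (1 + Real.exp (-2 * y)) / 2 = ((Real.exp y + Real.exp (-y)) / 2) * Real.exp (-y) by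
        rw [div_mul_eq_mul_div, add_mul, e1, e2]]
      rw [Real.log_mul (by positivity) (Real.exp_ne_zero _), Real.log_exp]
      ring
    simp only [h]
    have hlim : Tendsto (fun y : ℝ => (1 + Real.exp (-2 * y)) / 2) atTop (𝓝 ((1 + 0) / 2)) := by
      refine Tendsto.div_const (tendsto_const_nhds.add ?_) 2
      exact Real.tendsto_exp_atBot.comp
        ((tendsto_const_mul_atBot_of_neg (by norm_num : (-2:ℝ) < 0)).mpr tendsto_id)
    have := (Real.continuousAt_log (by norm_num)).tendsto.comp hlim
    simpa [Real.log_div, Real.log_inv, Function.comp_def] using this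
  have h2 : Tendsto (fun y : ℝ => Real.log (Real.cosh (y - a)) - (y - a)) atTop
      (𝓝 (-Real.log 2)) := key.comp (tendsto_atTop_add_const_right _ (-a) tendsto_id)
  have hdiff := key.sub h2
  have heq : ∀ y : ℝ, (Real.log (Real.cosh y) - y) - (Real.log (Real.cosh (y - a)) - (y - a))
      = Real.log (Real.cosh y) - Real.log (Real.cosh (y - a)) - a := by intro y; ring
  simp only [heq] at hdiff
  have := hdiff.add_const a
  simpa using this

lemma aux_tendsto_bot (a : ℝ) :
    Tendsto (fun y : ℝ => Real.log (Real.cosh y) - Real.log (Real.cosh (y - a)))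
      atBot (𝓝 (-a)) := by
  have key : Tendsto (fun y : ℝ => Real.log (Real.cosh y) + y) atBot (𝓝 (-Real.log 2)) := by
    have h : ∀ y : ℝ, Real.log (Real.cosh y) + y = Real.log ((1 + Real.exp (2 * y)) / 2) := by
      intro y
      rw [Real.cosh_eq, eq_comm]
      have e1 : Real.exp (-y) * Real.exp y = 1 := by rw [← Real.exp_add]; simp
      have e2 : Real.exp y * Real.exp y = Real.exp (2 * y) := by
        rw [← Real.exp_add]; ring_nf
      rw [show (1 + Real.exp (2 * y)) / 2 = ((Real.exp y + Real.exp (-y)) / 2) * Real.exp y by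
        rw [div_mul_eq_mul_div, add_mul, e1, e2]; ring]
      rw [Real.log_mul (by positivity) (Real.exp_ne_zero _), Real.log_exp]
    simp only [h]
    have hlim : Tendsto (fun y : ℝ => (1 + Real.exp (2 * y)) / 2) atBot (𝓝 ((1 + 0) / 2)) := by
      refine Tendsto.div_const (tendsto_const_nhds.add ?_) 2
      exact Real.tendsto_exp_atBot.comp
        ((tendsto_const_mul_atBot_of_pos (by norm_num : (0:ℝ) < 2)).mpr tendsto_id)
    have := (Real.continuousAt_log (by norm_num)).tendsto.comp hlim
    simpa [Real.log_div, Real.log_inv, Function.comp_def] using this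
  have h2 : Tendsto (fun y : ℝ => Real.log (Real.cosh (y - a)) + (y - a)) atBot
      (𝓝 (-Real.log 2)) := key.comp (tendsto_atBot_add_const_right _ (-a) tendsto_id)
  have hdiff := key.sub h2
  have heq : ∀ y : ℝ, (Real.log (Real.cosh y) + y) - (Real.log (Real.cosh (y - a)) + (y - a))
      = Real.log (Real.cosh y) - Real.log (Real.cosh (y - a)) + a := by intro y; ring
  simp only [heq] at hdiff
  have := hdiff.add_const (-a)
  simpa using this

/-- The density of the sum of two independent hyperbolic secant random variables:
for `a ≠ 0`, `∫ (1/π²)(1/cosh y)(1/cosh(a-y)) dy = 4a/(π²(eᵃ - e⁻ᵃ))`. -/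
theorem convolution_hyperbolic_secant (a : ℝ) (ha : a ≠ 0) :
    ∫ y : ℝ, (1 / π ^ 2) * (1 / Real.cosh y) * (1 / Real.cosh (a - y))
      = 4 * a / (π ^ 2 * (Real.exp a - Real.exp (-a))) := by
  have hsinh : Real.sinh a ≠ 0 := by
    simpa [Real.sinh_eq_zero] using ha
  set F : ℝ → ℝ := fun y => Real.log (Real.cosh y) - Real.log (Real.cosh (y - a)) with hF
  set f' : ℝ → ℝ := fun y => Real.sinh a * ((Real.cosh y)⁻¹ * (Real.cosh (y - a))⁻¹) with hf'
  have hderiv : ∀ y : ℝ, HasDerivAt F (f' y) y := by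
    intro y
    have c1 : Real.cosh y ≠ 0 := (Real.cosh_pos y).ne'
    have c2 : Real.cosh (y - a) ≠ 0 := (Real.cosh_pos (y - a)).ne'
    have h1 : HasDerivAt (fun y : ℝ => Real.log (Real.cosh y))
        (Real.sinh y / Real.cosh y) y := by
      simpa using (Real.hasDerivAt_cosh y).log c1
    have h2 : HasDerivAt (fun y : ℝ => Real.log (Real.cosh (y - a)))
        (Real.sinh (y - a) / Real.cosh (y - a)) y := by
      have hsub : HasDerivAt (fun y : ℝ => y - a) 1 y :=
        (hasDerivAt_id y).sub_const a
      have := (((Real.hasDerivAt_cosh (y - a)).log c2).comp y hsub)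
      simpa [Function.comp_def] using this
    have := h1.sub h2
    refine this.congr_deriv ?_
    have hid : Real.sinh a = Real.sinh y * Real.cosh (y - a)
        - Real.cosh y * Real.sinh (y - a) := by
      rw [← Real.sinh_sub]; ring_nf
    rw [hf']
    simp only
    rw [hid]
    field_simp
  have hint : Integrable f' := (aux_integrable_sech_mul a).const_mul _
  have key : ∫ y : ℝ, f' y = a - (-a) :=
    integral_of_hasDerivAt_of_tendsto hderiv hint (aux_tendsto_bot a) (aux_tendsto_top a)
  have heq : ∀ y : ℝ, (1 / π ^ 2) * (1 / Real.cosh y) * (1 / Real.cosh (a - y))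
      = (1 / (π ^ 2 * Real.sinh a)) * f' y := by
    intro y
    have c1 : Real.cosh y ≠ 0 := (Real.cosh_pos y).ne'
    have c2 : Real.cosh (y - a) ≠ 0 := (Real.cosh_pos (y - a)).ne'
    rw [hf', show a - y = -(y - a) by ring, Real.cosh_neg]
    simp only
    field_simp
  rw [show (fun y : ℝ => (1 / π ^ 2) * (1 / Real.cosh y) * (1 / Real.cosh (a - y)))
      = fun y => (1 / (π ^ 2 * Real.sinh a)) * f' y from funext heq]
  rw [integral_const_mul, key]
  rw [Real.sinh_eq]
  have hpi : (π : ℝ) ≠ 0 := Real.pi_ne_zero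
  have hne : Real.exp a - Real.exp (-a) ≠ 0 := by
    intro h
    apply hsinh
    rw [Real.sinh_eq, h]; ring
  field_simp
  ring
end

section
/- For every real number t with |t| < 1, ∫_{-∞}^{∞} e^{t a} · 4a / (π² (e^a - e^{-a})) da = 1 / cos²(π t / 2). (This is the moment generating function of the sum of two independent hyperbolic secant random variables.) -/
open Real MeasureTheory

namespace MGFHypSecAux
open Set Filter Topology


lemma integrableOn_Ioi_exp_div_cosh {t : ℝ} (ht : t < 1) :
    IntegrableOn (fun x : ℝ => Real.exp (t * x) / Real.cosh x) (Ioi 0) := by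
  have hcont : Continuous fun x : ℝ => Real.exp (t * x) / Real.cosh x :=
    (Real.continuous_exp.comp (continuous_const.mul continuous_id)).div Real.continuous_cosh
      fun x => (Real.cosh_pos x).ne'
  refine Integrable.mono' ((exp_neg_integrableOn_Ioi 0 (b := 1 - t) (by linarith)).const_mul 2)
    hcont.aestronglyMeasurable.restrict ?_
  filter_upwards [] with x
  rw [Real.norm_eq_abs, abs_of_nonneg (by positivity)]
  have h1 : Real.exp x / 2 ≤ Real.cosh x := by
    rw [Real.cosh_eq]; nlinarith [Real.exp_pos (-x)]
  have h2 : Real.exp (t * x) / (Real.exp x / 2) = 2 * Real.exp (-(1 - t) * x) := by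
    rw [show (-(1 - t) * x) = t * x + (-x) by ring, Real.exp_add, Real.exp_neg]
    field_simp
  calc Real.exp (t * x) / Real.cosh x ≤ Real.exp (t * x) / (Real.exp x / 2) := by
        apply div_le_div_of_nonneg_left (by positivity) (by positivity) h1
    _ = 2 * Real.exp (-(1 - t) * x) := h2

lemma integrable_exp_div_cosh {t : ℝ} (ht : |t| < 1) :
    Integrable fun x : ℝ => Real.exp (t * x) / Real.cosh x := by
  obtain ⟨h1, h2⟩ := abs_lt.mp ht
  rw [← integrableOn_univ, ← Set.Iic_union_Ioi (a := (0:ℝ)), integrableOn_union]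
  refine ⟨?_, integrableOn_Ioi_exp_div_cosh h2⟩
  rw [← (Measure.measurePreserving_neg (volume : Measure ℝ)).integrableOn_comp_preimage
      (Homeomorph.neg ℝ).measurableEmbedding]
  simp only [Function.comp_def, neg_preimage, neg_Iic, neg_zero, Real.cosh_neg, mul_neg,
    ← neg_mul]
  rw [integrableOn_Ici_iff_integrableOn_Ioi]
  exact integrableOn_Ioi_exp_div_cosh (by linarith)



lemma integrable_inv_cosh : Integrable fun x : ℝ => (Real.cosh x)⁻¹ := by
  have : Integrable fun x : ℝ => Real.exp ((0:ℝ) * x) / Real.cosh x :=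
    integrable_exp_div_cosh (by norm_num)
  simpa using this

lemma integrable_inv_cosh_mul (a : ℝ) :
    Integrable fun y : ℝ => (Real.cosh y * Real.cosh (y - a))⁻¹ := by
  have h0 : Integrable fun x : ℝ => (Real.cosh x)⁻¹ := integrable_inv_cosh
  have h1 : Integrable fun y : ℝ => (Real.cosh (y - a))⁻¹ := h0.comp_sub_right a
  have h2 : Integrable fun y : ℝ => (Real.cosh (2 * y - a))⁻¹ := by
    have := (integrable_comp_mul_left_iff (fun y : ℝ => (Real.cosh (y - a))⁻¹)
      (R := 2) two_ne_zero).mpr h1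
    simpa using this
  have hcont : Continuous fun y : ℝ => (Real.cosh y * Real.cosh (y - a))⁻¹ := by
    apply Continuous.inv₀
    · exact Real.continuous_cosh.mul (Real.continuous_cosh.comp (continuous_id.sub continuous_const))
    · intro y; positivity
  refine (h2.const_mul 2).mono' hcont.aestronglyMeasurable ?_
  filter_upwards [] with y
  rw [Real.norm_eq_abs, abs_of_nonneg (by positivity)]
  have e1 : Real.cosh (2 * y - a) = Real.cosh y * Real.cosh (y - a)
      + Real.sinh y * Real.sinh (y - a) := by
    rw [show 2 * y - a = y + (y - a) by ring, Real.cosh_add]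
  have e2 := Real.cosh_sub y (y - a)
  simp only [sub_sub_cancel] at e2
  have key : Real.cosh (2 * y - a) + Real.cosh a = 2 * (Real.cosh y * Real.cosh (y - a)) := by
    rw [e1, e2]; ring
  calc (Real.cosh y * Real.cosh (y - a))⁻¹ ≤ (Real.cosh (2 * y - a) / 2)⁻¹ := by
        apply inv_anti₀ (by positivity)
        nlinarith [Real.cosh_pos a]
    _ = 2 * (Real.cosh (2 * y - a))⁻¹ := by
        rw [inv_div, div_eq_mul_inv]

lemma tendsto_log_cosh_sub_atTop :
    Tendsto (fun u : ℝ => Real.log (Real.cosh u) - u) atTop (𝓝 (-Real.log 2)) := by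
  have h1 : ∀ u : ℝ, Real.log (Real.cosh u) - u
      = Real.log ((1 + Real.exp (-(2 * u))) / 2) := by
    intro u
    have hcd : (1 + Real.exp (-(2 * u))) / 2 = Real.cosh u / Real.exp u := by
      rw [Real.cosh_eq, show -(2 * u) = -u - u by ring, Real.exp_sub, div_div,
        div_eq_div_iff two_ne_zero (by positivity : (2:ℝ) * Real.exp u ≠ 0)]
      field_simp
    rw [hcd, Real.log_div (Real.cosh_pos u).ne' (Real.exp_ne_zero u), Real.log_exp]
  simp only [h1]
  have h2 : Tendsto (fun u : ℝ => (1 + Real.exp (-(2 * u))) / 2) atTop (𝓝 ((1 + 0) / 2)) := by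
    apply Tendsto.div_const
    apply tendsto_const_nhds.add
    apply Real.tendsto_exp_atBot.comp
    exact tendsto_neg_atTop_atBot.comp (tendsto_id.const_mul_atTop two_pos)
  have h3 := (Real.continuousAt_log (by norm_num : ((1:ℝ) + 0) / 2 ≠ 0)).tendsto.comp h2
  simp only [Function.comp_def] at h3
  convert h3 using 2
  rw [show ((1:ℝ) + 0) / 2 = 2⁻¹ by norm_num, Real.log_inv]

lemma tendsto_log_cosh_add_atBot :
    Tendsto (fun u : ℝ => Real.log (Real.cosh u) + u) atBot (𝓝 (-Real.log 2)) := by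
  have h := tendsto_log_cosh_sub_atTop.comp tendsto_neg_atBot_atTop
  simp only [Function.comp_def, Real.cosh_neg, sub_neg_eq_add] at h
  exact h

lemma conv_integral {a : ℝ} (ha : a ≠ 0) :
    ∫ y : ℝ, (Real.cosh y * Real.cosh (a - y))⁻¹ = 2 * a / Real.sinh a := by
  have hsinh : Real.sinh a ≠ 0 := by
    simp [Real.sinh_eq_zero, ha]
  -- the derivative identity
  have key : ∀ y : ℝ, Real.tanh y - Real.tanh (y - a)
      = Real.sinh a * (Real.cosh y * Real.cosh (y - a))⁻¹ := by
    intro y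
    have h := Real.sinh_sub y (y - a)
    simp only [sub_sub_cancel] at h
    rw [Real.tanh_eq_sinh_div_cosh, Real.tanh_eq_sinh_div_cosh]
    have c1 := (Real.cosh_pos y).ne'
    have c2 := (Real.cosh_pos (y - a)).ne'
    field_simp
    linarith [h]
  have hF : ∀ y : ℝ, HasDerivAt (fun y : ℝ => Real.log (Real.cosh y) - Real.log (Real.cosh (y - a)))
      (Real.tanh y - Real.tanh (y - a)) y := by
    intro y
    have h1 : HasDerivAt (fun y : ℝ => Real.log (Real.cosh y)) (Real.tanh y) y := by
      simpa [Real.tanh_eq_sinh_div_cosh] using (Real.hasDerivAt_cosh y).log (Real.cosh_pos y).ne'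
    have h2 : HasDerivAt (fun z : ℝ => Real.log (Real.cosh (z - a))) (Real.tanh (y - a)) y := by
      have hinner : HasDerivAt (fun z : ℝ => z - a) 1 y := (hasDerivAt_id y).sub_const a
      have houter := (Real.hasDerivAt_cosh (y - a)).log (Real.cosh_pos (y - a)).ne'
      have := HasDerivAt.comp y houter hinner
      simpa [Real.tanh_eq_sinh_div_cosh, Function.comp_def] using this
    exact h1.sub h2
  have hint : Integrable fun y : ℝ => Real.tanh y - Real.tanh (y - a) := by
    have : (fun y : ℝ => Real.tanh y - Real.tanh (y - a))
        = fun y : ℝ => Real.sinh a * (Real.cosh y * Real.cosh (y - a))⁻¹ := funext key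
    rw [this]
    exact (integrable_inv_cosh_mul a).const_mul _
  -- limits
  have htop : Tendsto (fun y : ℝ => Real.log (Real.cosh y) - Real.log (Real.cosh (y - a)))
      atTop (𝓝 a) := by
    have hcomp : Tendsto (fun y : ℝ => Real.log (Real.cosh (y - a)) - (y - a)) atTop
        (𝓝 (-Real.log 2)) := by
      apply tendsto_log_cosh_sub_atTop.comp
      simpa [sub_eq_add_neg] using tendsto_atTop_add_const_right atTop (-a) tendsto_id
    have := (tendsto_log_cosh_sub_atTop.sub hcomp).add_const a
    have heq : (fun y : ℝ => (Real.log (Real.cosh y) - y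
        - (Real.log (Real.cosh (y - a)) - (y - a))) + a)
        = fun y : ℝ => Real.log (Real.cosh y) - Real.log (Real.cosh (y - a)) := by
      funext y; ring
    rw [heq] at this
    simpa using this
  have hbot : Tendsto (fun y : ℝ => Real.log (Real.cosh y) - Real.log (Real.cosh (y - a)))
      atBot (𝓝 (-a)) := by
    have hcomp : Tendsto (fun y : ℝ => Real.log (Real.cosh (y - a)) + (y - a)) atBot
        (𝓝 (-Real.log 2)) := by
      apply tendsto_log_cosh_add_atBot.comp
      simpa [sub_eq_add_neg] using tendsto_atBot_add_const_right atBot (-a) tendsto_id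
    have := (tendsto_log_cosh_add_atBot.sub hcomp).sub_const a
    have heq : (fun y : ℝ => (Real.log (Real.cosh y) + y
        - (Real.log (Real.cosh (y - a)) + (y - a))) - a)
        = fun y : ℝ => Real.log (Real.cosh y) - Real.log (Real.cosh (y - a)) := by
      funext y; ring
    rw [heq] at this
    simpa using this
  have hFTC := MeasureTheory.integral_of_hasDerivAt_of_tendsto hF hint hbot htop
  -- hFTC : ∫ y, tanh y - tanh (y - a) = a - -a
  have : ∫ y : ℝ, (Real.cosh y * Real.cosh (a - y))⁻¹
      = ∫ y : ℝ, (Real.sinh a)⁻¹ * (Real.tanh y - Real.tanh (y - a)) := by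
    congr 1
    funext y
    rw [key y, show a - y = -(y - a) by ring, Real.cosh_neg]
    field_simp
  rw [this, MeasureTheory.integral_const_mul, hFTC]
  field_simp
  ring



lemma beta_real {s : ℝ} (hs0 : 0 < s) (hs1 : s < 1) :
    ∫ x in Ioo (0:ℝ) 1, x ^ (s - 1) * (1 - x) ^ (-s) = π / Real.sin (π * s) := by
  have h1 : Complex.Gamma s * Complex.Gamma (1 - s)
      = Complex.Gamma ((s : ℂ) + (1 - s)) * Complex.betaIntegral s (1 - s) := by
    apply Complex.Gamma_mul_Gamma_eq_betaIntegral
    · simpa using hs0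
    · simp only [Complex.sub_re, Complex.one_re, Complex.ofReal_re]
      linarith
  have h2 : Complex.Gamma s * Complex.Gamma (1 - s) = ↑π / Complex.sin (↑π * s) :=
    Complex.Gamma_mul_Gamma_one_sub s
  have h3 : ((s : ℂ) + (1 - s)) = 1 := by ring
  rw [h3, Complex.Gamma_one, one_mul] at h1
  have h4 : Complex.betaIntegral s (1 - s)
      = ↑(∫ x in Ioo (0:ℝ) 1, x ^ (s - 1) * (1 - x) ^ (-s)) := by
    rw [Complex.betaIntegral]
    rw [intervalIntegral.integral_of_le zero_le_one, MeasureTheory.integral_Ioc_eq_integral_Ioo]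
    have hpt : ∀ x ∈ Ioo (0:ℝ) 1, (x:ℂ) ^ ((s:ℂ) - 1) * (1 - (x:ℂ)) ^ (1 - (s:ℂ) - 1)
        = ((x ^ (s - 1) * (1 - x) ^ (-s) : ℝ) : ℂ) := by
      intro x hx
      obtain ⟨hx0, hx1⟩ := hx
      push_cast
      rw [Complex.ofReal_cpow hx0.le, Complex.ofReal_cpow (by linarith : (0:ℝ) ≤ 1 - x)]
      push_cast
      ring_nf
    rw [setIntegral_congr_fun measurableSet_Ioo hpt]
    exact integral_ofReal
  rw [h4, h2] at h1
  have h5 : (↑(π / Real.sin (π * s)) : ℂ) = ↑π / Complex.sin (↑π * s) := by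
    push_cast [Complex.ofReal_sin]
    rfl
  rw [← h5] at h1
  exact_mod_cast h1.symm

lemma step_v {s : ℝ} (hs0 : 0 < s) (hs1 : s < 1) :
    ∫ v in Ioi (0:ℝ), v ^ (s - 1) / (1 + v) = π / Real.sin (π * s) := by
  have himg : (fun v : ℝ => v / (1 + v)) '' Ioi 0 = Ioo 0 1 := by
    ext x
    simp only [mem_image, mem_Ioi, mem_Ioo]
    constructor
    · rintro ⟨v, hv, rfl⟩
      constructor
      · positivity
      · rw [div_lt_one (by positivity)]; linarith
    · rintro ⟨hx0, hx1⟩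
      refine ⟨x / (1 - x), div_pos hx0 (by linarith), ?_⟩
      have h1x : (1:ℝ) - x ≠ 0 := by linarith
      field_simp; ring
  have hderiv : ∀ v ∈ Ioi (0:ℝ), HasDerivWithinAt (fun v : ℝ => v / (1 + v))
      (((1 + v) ^ 2)⁻¹) (Ioi 0) v := by
    intro v hv
    have h0 : (0:ℝ) < 1 + v := by simp only [mem_Ioi] at hv; linarith
    have := (hasDerivAt_id v).div ((hasDerivAt_id v).const_add 1) h0.ne'
    simp only [id_eq] at this
    have heq : (1 * (1 + v) - v * 1) / (1 + v) ^ 2 = ((1 + v) ^ 2)⁻¹ := by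
      field_simp; ring
    rw [heq] at this
    exact this.hasDerivWithinAt
  have hinj : InjOn (fun v : ℝ => v / (1 + v)) (Ioi 0) := by
    intro v hv w hw h
    simp only [mem_Ioi] at hv hw
    have h1 : (1:ℝ) + v ≠ 0 := by linarith
    have h2 : (1:ℝ) + w ≠ 0 := by linarith
    field_simp at h
    nlinarith
  have hmain := MeasureTheory.integral_image_eq_integral_abs_deriv_smul measurableSet_Ioi
    hderiv hinj (fun x : ℝ => x ^ (s - 1) * (1 - x) ^ (-s))
  rw [himg, beta_real hs0 hs1] at hmain
  rw [hmain]
  symm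
  refine setIntegral_congr_fun measurableSet_Ioi (fun v hv => ?_)
  simp only [mem_Ioi] at hv
  have h0 : (0:ℝ) < 1 + v := by linarith
  have e1 : (1:ℝ) - v / (1 + v) = (1 + v)⁻¹ := by field_simp; ring
  rw [smul_eq_mul, abs_of_pos (by positivity : (0:ℝ) < ((1 + v) ^ 2)⁻¹), e1,
    Real.div_rpow hv.le h0.le, Real.inv_rpow h0.le, Real.rpow_neg h0.le, inv_inv]
  have e2 : (1 + v) ^ s = (1 + v) ^ (s - 1) * (1 + v) := by
    rw [← Real.rpow_add_one h0.ne']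
    norm_num
  rw [e2]
  have hne : (1 + v) ^ (s - 1) ≠ 0 := (Real.rpow_pos_of_pos h0 _).ne'
  field_simp

lemma step_u {t : ℝ} (ht : |t| < 1) :
    ∫ u in Ioi (0:ℝ), 2 * u ^ t / (1 + u ^ 2) = π / Real.cos (π * t / 2) := by
  obtain ⟨ht1, ht2⟩ := abs_lt.mp ht
  set s : ℝ := (t + 1) / 2 with hs
  have hs0 : 0 < s := by rw [hs]; linarith
  have hs1 : s < 1 := by rw [hs]; linarith
  have himg : (fun u : ℝ => u ^ 2) '' Ioi 0 = Ioi 0 := by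
    ext x
    simp only [mem_image, mem_Ioi]
    constructor
    · rintro ⟨u, hu, rfl⟩; positivity
    · intro hx
      exact ⟨Real.sqrt x, Real.sqrt_pos.mpr hx, Real.sq_sqrt hx.le⟩
  have hderiv : ∀ u ∈ Ioi (0:ℝ), HasDerivWithinAt (fun u : ℝ => u ^ 2) (2 * u) (Ioi 0) u := by
    intro u hu
    have := hasDerivAt_pow 2 u
    norm_num at this
    exact this.hasDerivWithinAt
  have hinj : InjOn (fun u : ℝ => u ^ 2) (Ioi 0) := by
    intro u hu w hw h
    simp only [mem_Ioi] at hu hw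
    simp only at h
    nlinarith [sq_nonneg (u - w), sq_nonneg (u + w)]
  have hmain := MeasureTheory.integral_image_eq_integral_abs_deriv_smul measurableSet_Ioi
    hderiv hinj (fun v : ℝ => v ^ (s - 1) / (1 + v))
  rw [himg, step_v hs0 hs1] at hmain
  have htrig : Real.sin (π * s) = Real.cos (π * t / 2) := by
    rw [hs, show π * ((t + 1) / 2) = π * t / 2 + π / 2 by ring, Real.sin_add_pi_div_two]
  rw [htrig] at hmain
  rw [hmain]
  symm
  refine setIntegral_congr_fun measurableSet_Ioi (fun u hu => ?_)
  simp only [mem_Ioi] at hu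
  rw [smul_eq_mul, abs_of_pos (by positivity : (0:ℝ) < 2 * u)]
  have e1 : (u ^ 2 : ℝ) ^ (s - 1) = u ^ (t - 1) := by
    rw [← Real.rpow_natCast u 2, ← Real.rpow_mul hu.le]
    congr 1
    rw [hs]
    push_cast
    ring
  have e2 : u * u ^ (t - 1) = u ^ t := by
    nth_rewrite 1 [← Real.rpow_one u]
    rw [← Real.rpow_add hu]
    norm_num
  rw [e1, ← e2]
  ring

lemma M_value {t : ℝ} (ht : |t| < 1) :
    ∫ x : ℝ, Real.exp (t * x) / Real.cosh x = π / Real.cos (π * t / 2) := by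
  have himg : Real.exp '' univ = Ioi 0 := by rw [image_univ, Real.range_exp]
  have hmain := MeasureTheory.integral_image_eq_integral_abs_deriv_smul MeasurableSet.univ
    (fun x _ => (Real.hasDerivAt_exp x).hasDerivWithinAt) Real.exp_injective.injOn
    (fun u : ℝ => 2 * u ^ t / (1 + u ^ 2))
  rw [himg, setIntegral_univ, step_u ht] at hmain
  rw [hmain]
  congr 1
  funext x
  symm
  rw [smul_eq_mul, abs_of_pos (Real.exp_pos x)]
  have e1 : (Real.exp x) ^ t = Real.exp (t * x) := by
    rw [← Real.exp_mul, mul_comm]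
  have hden : 1 + Real.exp x ^ 2 = Real.exp x * (2 * Real.cosh x) := by
    rw [Real.cosh_eq, Real.exp_neg]
    have := Real.exp_ne_zero x
    field_simp
    ring
  rw [e1, hden]
  have h1 := Real.exp_ne_zero x
  have h2 := (Real.cosh_pos x).ne'
  field_simp


end MGFHypSecAux

open MGFHypSecAux Set Filter Topology in
/-- The moment generating function of the sum of two independent hyperbolic secant random
variables: for `|t| < 1`, `∫ e^{t a} · 4a/(π²(eᵃ - e⁻ᵃ)) da = 1/cos²(π t/2)`. -/
theorem mgf_sum_two_hyperbolic_secant (t : ℝ) (ht : |t| < 1) :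
    ∫ a : ℝ, Real.exp (t * a) * (4 * a / (π ^ 2 * (Real.exp a - Real.exp (-a))))
      = 1 / Real.cos (π * t / 2) ^ 2 := by
  obtain ⟨ht1, ht2⟩ := abs_lt.mp ht
  have hπ : (π : ℝ) ≠ 0 := Real.pi_ne_zero
  have hcos : 0 < Real.cos (π * t / 2) := by
    apply Real.cos_pos_of_mem_Ioo
    constructor
    · nlinarith [Real.pi_pos]
    · nlinarith [Real.pi_pos]
  set h : ℝ → ℝ := fun x => Real.exp (t * x) / Real.cosh x with hh
  have hint : Integrable h := integrable_exp_div_cosh ht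
  have hM : ∫ x, h x = π / Real.cos (π * t / 2) := M_value ht
  have hprod : Integrable (Function.uncurry fun a y : ℝ => h y * h (a - y))
      ((volume : Measure ℝ).prod volume) := by
    have hG : Integrable (fun q : ℝ × ℝ => h q.1 * h q.2) (volume.prod volume) :=
      hint.mul_prod hint
    have hT := measurePreserving_prod_sub_swap (volume : Measure ℝ) volume
    have := (hT.integrable_comp hG.aestronglyMeasurable).mpr hG
    exact this
  have hae : (fun a : ℝ => Real.exp (t * a) * (4 * a / (π ^ 2 * (Real.exp a - Real.exp (-a)))))
      =ᵐ[volume] fun a : ℝ => (π ^ 2)⁻¹ * ∫ y, h y * h (a - y) := by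
    have h0 : ∀ᵐ a : ℝ, a ≠ 0 := by
      rw [ae_iff]
      have hset : {a : ℝ | ¬ a ≠ 0} = {0} := by ext a; simp
      rw [hset]
      exact measure_singleton 0
    filter_upwards [h0] with a ha
    have hsinh : Real.sinh a ≠ 0 := by simp [Real.sinh_eq_zero, ha]
    have hconv := conv_integral ha
    have hinner : ∫ y, h y * h (a - y)
        = Real.exp (t * a) * ∫ y, (Real.cosh y * Real.cosh (a - y))⁻¹ := by
      rw [← MeasureTheory.integral_const_mul]
      congr 1
      funext y
      simp only [hh]
      rw [div_mul_div_comm, ← Real.exp_add, show t * y + t * (a - y) = t * a by ring,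
        div_eq_mul_inv]
    rw [hinner, hconv]
    have he : Real.exp a - Real.exp (-a) = 2 * Real.sinh a := by rw [Real.sinh_eq]; ring
    rw [he]
    field_simp
    ring
  rw [integral_congr_ae hae, MeasureTheory.integral_const_mul,
    MeasureTheory.integral_integral_swap hprod]
  have hswap : ∀ y : ℝ, (∫ a, h y * h (a - y)) = h y * (π / Real.cos (π * t / 2)) := by
    intro y
    rw [MeasureTheory.integral_const_mul, MeasureTheory.integral_sub_right_eq_self h y, hM]
  simp only [hswap]
  rw [MeasureTheory.integral_mul_const, hM]
  field_simp
end

section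
/- For every nonnegative integer n, ∫_{-∞}^{∞} x^{2n} · 4x / (π² (e^x - e^{-x})) dx = (8/π²) (2n+1)! Σ_{k=0}^{∞} 1/(2k+1)^{2n+2}. -/
open Real MeasureTheory Set

private lemma aux_integrable (m : ℕ) {r : ℝ} (hr : 0 < r) :
    IntegrableOn (fun x : ℝ => x ^ m * Real.exp (-(r * x))) (Ioi 0) := by
  have h := integrableOn_rpow_mul_exp_neg_mul_rpow (s := (m : ℝ)) (p := 1)
    (lt_of_lt_of_le neg_one_lt_zero (Nat.cast_nonneg m)) one_pos hr
  refine h.congr_fun (fun x hx => ?_) measurableSet_Ioi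
  simp [Real.rpow_natCast, Real.rpow_one, neg_mul]

private lemma aux_int (m : ℕ) {r : ℝ} (hr : 0 < r) :
    ∫ x in Ioi (0 : ℝ), x ^ m * Real.exp (-(r * x))
      = (Nat.factorial m : ℝ) / r ^ (m + 1) := by
  have h := Real.integral_rpow_mul_exp_neg_mul_Ioi (a := (m : ℝ) + 1) (by positivity) hr
  rw [show ((m : ℝ) + 1) - 1 = (m : ℝ) by ring] at h
  simp_rw [Real.rpow_natCast] at h
  rw [Real.Gamma_nat_eq_factorial] at h
  rw [show ((m : ℝ) + 1) = ((m + 1 : ℕ) : ℝ) by push_cast; ring, Real.rpow_natCast] at h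
  rw [h, one_div, inv_pow, inv_mul_eq_div]

private lemma aux_tsum (m : ℕ) {x : ℝ} (hx : 0 < x) :
    ∑' k : ℕ, x ^ m * Real.exp (-((2 * (k : ℝ) + 1) * x))
      = x ^ m / (Real.exp x - Real.exp (-x)) := by
  have h1 : ∀ k : ℕ, Real.exp (-((2 * (k : ℝ) + 1) * x))
      = Real.exp (-x) * Real.exp (-(2 * x)) ^ k := by
    intro k
    rw [← Real.exp_nat_mul, ← Real.exp_add]
    ring_nf
  have hlt : Real.exp (-(2 * x)) < 1 := Real.exp_lt_one_iff.mpr (by linarith)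
  have hge : (0 : ℝ) ≤ Real.exp (-(2 * x)) := (Real.exp_pos _).le
  have hne1 : 1 - Real.exp (-(2 * x)) ≠ 0 := by linarith
  have hne2 : Real.exp x - Real.exp (-x) ≠ 0 := by
    have : Real.exp (-x) < Real.exp x := Real.exp_lt_exp.mpr (by linarith)
    linarith
  simp_rw [h1, ← mul_assoc]
  rw [tsum_mul_left, tsum_geometric_of_lt_one hge hlt]
  have e1 : Real.exp (-x) * Real.exp x = 1 := by rw [← Real.exp_add]; simp
  have e2 : Real.exp (-x) * Real.exp (-x) = Real.exp (-(2 * x)) := by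
    rw [← Real.exp_add]; ring_nf
  rw [eq_div_iff hne2]
  have h3 : Real.exp (-x) * (Real.exp x - Real.exp (-x)) = 1 - Real.exp (-(2 * x)) := by
    rw [mul_sub, e1, e2]
  calc _ = x ^ m * (Real.exp (-x) * (Real.exp x - Real.exp (-x))) * (1 - Real.exp (-(2 * x)))⁻¹ := by ring
    _ = x ^ m := by rw [h3, mul_assoc, mul_inv_cancel₀ hne1, mul_one]

private lemma aux_summable (c : ℝ) (p : ℕ) (hp : 2 ≤ p) :
    Summable (fun k : ℕ => c / (2 * (k : ℝ) + 1) ^ p) := by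
  have hbase : Summable (fun k : ℕ => 1 / ((k : ℝ) + 1) ^ 2) := by
    have := (Real.summable_one_div_nat_pow (p := 2)).mpr one_lt_two
    have h2 := (summable_nat_add_iff 1).mpr this
    refine h2.congr fun k => ?_
    push_cast
    ring_nf
  have hsum : Summable (fun k : ℕ => 1 / (2 * (k : ℝ) + 1) ^ p) := by
    refine Summable.of_nonneg_of_le (fun k => by positivity) (fun k => ?_) hbase
    have hk : (0 : ℝ) ≤ (k : ℝ) := Nat.cast_nonneg k
    have h1 : ((k : ℝ) + 1) ^ 2 ≤ (2 * (k : ℝ) + 1) ^ 2 := by nlinarith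
    have h2 : (2 * (k : ℝ) + 1) ^ 2 ≤ (2 * (k : ℝ) + 1) ^ p :=
      pow_le_pow_right₀ (by linarith) hp
    apply one_div_le_one_div_of_le (by positivity)
    linarith
  exact (hsum.mul_left c).congr fun k => by rw [mul_one_div]

/-- `∫ x^{2n} · 4x/(π²(eˣ - e⁻ˣ)) dx = (8/π²)(2n+1)! ∑_{k=0}^∞ 1/(2k+1)^{2n+2}`. -/
theorem even_moment_sum_two_hyperbolic_secant (n : ℕ) :
    ∫ x : ℝ, x ^ (2 * n) * (4 * x / (π ^ 2 * (Real.exp x - Real.exp (-x))))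
      = (8 / π ^ 2) * (Nat.factorial (2 * n + 1) : ℝ) * ∑' k : ℕ, 1 / (2 * (k : ℝ) + 1) ^ (2 * n + 2) := by
  set f : ℝ → ℝ := fun x => x ^ (2 * n) * (4 * x / (π ^ 2 * (Real.exp x - Real.exp (-x)))) with hf
  set m : ℕ := 2 * n + 1 with hm
  have hπ : (0 : ℝ) < π ^ 2 := by positivity
  have hfeq : ∀ x : ℝ, f x = (4 / π ^ 2) * (x ^ m / (Real.exp x - Real.exp (-x))) := by
    intro x
    simp only [hf, hm]
    rw [show x ^ (2 * n + 1) = x ^ (2 * n) * x from pow_succ x (2 * n),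
      div_eq_mul_inv, div_eq_mul_inv, div_eq_mul_inv, mul_inv]
    ring
  -- evenness
  have habs : ∀ x : ℝ, f |x| = f x := by
    intro x
    rcases abs_cases x with ⟨h, _⟩ | ⟨h, _⟩
    · rw [h]
    · rw [h]
      simp only [hf, neg_neg]
      rw [Even.neg_pow (even_two_mul n)]
      congr 1
      rw [show Real.exp (-x) - Real.exp x = -(Real.exp x - Real.exp (-x)) by ring,
        mul_neg, mul_neg, neg_div_neg_eq]
  -- the terms of the series
  set G : ℕ → ℝ → ℝ :=
    fun k x => (4 / π ^ 2) * (x ^ m * Real.exp (-((2 * (k : ℝ) + 1) * x))) with hG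
  have hGint : ∀ k : ℕ, IntegrableOn (G k) (Ioi 0) := fun k =>
    (aux_integrable m (r := 2 * (k : ℝ) + 1) (by positivity)).const_mul _
  have hGval : ∀ k : ℕ, ∫ x in Ioi (0 : ℝ), G k x
      = (4 / π ^ 2) * ((Nat.factorial m : ℝ) / (2 * (k : ℝ) + 1) ^ (m + 1)) := by
    intro k
    simp only [hG]
    rw [integral_const_mul, aux_int m (by positivity)]
  have hGsum : Summable (fun k : ℕ =>
      (4 / π ^ 2) * ((Nat.factorial m : ℝ) / (2 * (k : ℝ) + 1) ^ (m + 1))) :=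
    (aux_summable (Nat.factorial m : ℝ) (m + 1) (by omega)).mul_left _
  have hnorm : Summable (fun k : ℕ => ∫ x in Ioi (0 : ℝ), ‖G k x‖) := by
    refine hGsum.congr fun k => ?_
    rw [← hGval k]
    refine setIntegral_congr_fun measurableSet_Ioi fun x hx => ?_
    have hx' : (0 : ℝ) < x := hx
    refine (norm_of_nonneg ?_).symm
    positivity
  have hswap := integral_tsum_of_summable_integral_norm (F := G) hGint hnorm
  have hIoi : ∫ x in Ioi (0 : ℝ), f x
      = ∑' k : ℕ, (4 / π ^ 2) * ((Nat.factorial m : ℝ) / (2 * (k : ℝ) + 1) ^ (m + 1)) := by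
    have hcongr : ∫ x in Ioi (0 : ℝ), f x = ∫ x in Ioi (0 : ℝ), ∑' k : ℕ, G k x := by
      refine setIntegral_congr_fun measurableSet_Ioi fun x hx => ?_
      have hx' : (0 : ℝ) < x := hx
      simp only [hG]
      rw [tsum_mul_left, aux_tsum m hx', hfeq x]
    rw [hcongr, ← hswap]
    exact tsum_congr fun k => hGval k
  have htotal : ∫ x : ℝ, f x = 2 * ∫ x in Ioi (0 : ℝ), f x := by
    rw [← integral_comp_abs (f := f)]
    exact integral_congr_ae (Filter.Eventually.of_forall fun x => (habs x).symm)
  rw [htotal, hIoi]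
  have hpull : ∑' k : ℕ, (4 / π ^ 2) * ((Nat.factorial m : ℝ) / (2 * (k : ℝ) + 1) ^ (m + 1))
      = ((4 / π ^ 2) * (Nat.factorial m : ℝ)) * ∑' k : ℕ, 1 / (2 * (k : ℝ) + 1) ^ (m + 1) := by
    rw [← tsum_mul_left]
    exact tsum_congr fun k => by rw [div_eq_mul_one_div ((Nat.factorial m : ℝ)), ← mul_assoc]
  rw [hpull, show m + 1 = 2 * n + 2 by omega]
  ring
end

section
/- For every nonnegative integer n, Σ_{k=0}^{∞} 1/(2k+1)^{2n+2} = (-1)^n (π/2)^{2n+2} (1/2) (1/(2n+1)!) Σ_{l=0}^{n} C(2n, 2l) E_{2l} E_{2n-2l}, where E_m denotes the m-th Euler number and C(a, b) is the binomial coefficient. -/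
open Real PowerSeries

noncomputable def tc (f : ℝ → ℝ) (n : ℕ) : ℝ := iteratedDeriv n f 0 / n.factorial

lemma coeff_of_hasFPowerSeriesAt {f : ℝ → ℝ} {p : FormalMultilinearSeries ℝ ℝ ℝ}
    (h : HasFPowerSeriesAt f p 0) (n : ℕ) : iteratedDeriv n f 0 = n.factorial * p.coeff n := by
  obtain ⟨r, hr⟩ := h
  have h2 := hr.factorial_smul (1 : ℝ) n
  rw [iteratedDeriv_eq_iteratedFDeriv, ← h2, FormalMultilinearSeries.coeff, nsmul_eq_mul]
  norm_num

lemma tc_of_hasFPowerSeriesAt {f : ℝ → ℝ} {p : FormalMultilinearSeries ℝ ℝ ℝ}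
    (h : HasFPowerSeriesAt f p 0) (n : ℕ) : tc f n = p.coeff n := by
  rw [tc, coeff_of_hasFPowerSeriesAt h]
  field_simp

lemma hasFPowerSeriesAt_mul {f g : ℝ → ℝ} {p q : FormalMultilinearSeries ℝ ℝ ℝ}
    (hf : HasFPowerSeriesAt f p 0) (hg : HasFPowerSeriesAt g q 0) :
    HasFPowerSeriesAt (fun x => f x * g x)
      (FormalMultilinearSeries.ofScalars ℝ
        (fun n => ∑ k ∈ Finset.range (n + 1), p.coeff k * q.coeff (n - k))) 0 := by
  rw [hasFPowerSeriesAt_iff]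
  obtain ⟨rp, hrp⟩ := hf
  obtain ⟨rq, hrq⟩ := hg
  have hfs := hasFPowerSeriesAt_iff.1 ⟨rp, hrp⟩
  have hgs := hasFPowerSeriesAt_iff.1 ⟨rq, hrq⟩
  filter_upwards [hfs, hgs, EMetric.ball_mem_nhds (0:ℝ) hrp.r_pos,
    EMetric.ball_mem_nhds (0:ℝ) hrq.r_pos] with z h1 h2 h3 h4
  rw [zero_add] at h1 h2 ⊢
  simp only [smul_eq_mul] at h1 h2
  have hsp : Summable fun n => ‖z ^ n * p.coeff n‖ := by
    have := p.summable_norm_apply (x := z) (EMetric.ball_subset_ball hrp.r_le h3)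
    simpa [FormalMultilinearSeries.apply_eq_pow_smul_coeff] using this
  have hsq : Summable fun n => ‖z ^ n * q.coeff n‖ := by
    have := q.summable_norm_apply (x := z) (EMetric.ball_subset_ball hrq.r_le h4)
    simpa [FormalMultilinearSeries.apply_eq_pow_smul_coeff] using this
  have key : HasSum (fun n => ∑ k ∈ Finset.range (n + 1),
      (z ^ k * p.coeff k) * (z ^ (n - k) * q.coeff (n - k))) (f z * g z) := by
    have hsum : Summable fun n => ∑ k ∈ Finset.range (n + 1),
        (z ^ k * p.coeff k) * (z ^ (n - k) * q.coeff (n - k)) :=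
      (summable_norm_sum_mul_range_of_summable_norm hsp hsq).of_norm
    rw [Summable.hasSum_iff hsum,
      ← tsum_mul_tsum_eq_tsum_sum_range_of_summable_norm hsp hsq,
      h1.tsum_eq, h2.tsum_eq]
  convert key using 2 with n
  · rfl
  rw [show ∀ c : ℕ → ℝ, (FormalMultilinearSeries.ofScalars ℝ c).coeff n = c n from
    fun c => FormalMultilinearSeries.coeff_ofScalars, smul_eq_mul]
  rw [Finset.mul_sum]
  refine Finset.sum_congr rfl fun k hk => ?_
  have hk' : k ≤ n := Nat.lt_succ_iff.1 (Finset.mem_range.1 hk)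
  have hz : z ^ n = z ^ k * z ^ (n - k) := by rw [← pow_add]; congr 1; omega
  rw [hz]; ring

lemma ofScalars_coeff (c : ℕ → ℝ) (n : ℕ) :
    (FormalMultilinearSeries.ofScalars ℝ c).coeff n = c n := by
  simp [FormalMultilinearSeries.ofScalars, FormalMultilinearSeries.coeff, List.prod_ofFn]

noncomputable def PS (f : ℝ → ℝ) : PowerSeries ℝ := PowerSeries.mk (tc f)

lemma PS_coeff (f : ℝ → ℝ) (n : ℕ) : PowerSeries.coeff n (PS f) = tc f n :=
  PowerSeries.coeff_mk _ _

lemma PS_mul {f g : ℝ → ℝ} (hf : AnalyticAt ℝ f 0) (hg : AnalyticAt ℝ g 0) :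
    PS (fun x => f x * g x) = PS f * PS g := by
  obtain ⟨p, hp⟩ := hf
  obtain ⟨q, hq⟩ := hg
  ext n
  rw [PowerSeries.coeff_mul, PS_coeff, tc_of_hasFPowerSeriesAt (hasFPowerSeriesAt_mul hp hq),
    ofScalars_coeff, Finset.Nat.sum_antidiagonal_eq_sum_range_succ_mk]
  exact Finset.sum_congr rfl fun k _ => by
    rw [PS_coeff, PS_coeff, tc_of_hasFPowerSeriesAt hp, tc_of_hasFPowerSeriesAt hq]

lemma PS_exp_mul (c : ℝ) :
    PS (fun x => Real.exp (c * x)) = PowerSeries.rescale c (PowerSeries.exp ℝ) := by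
  ext n
  rw [PS_coeff, PowerSeries.coeff_rescale, PowerSeries.coeff_exp, tc]
  have : iteratedDeriv n (fun x => Real.exp (c * x)) 0 = c ^ n := by
    rw [iteratedDeriv_exp_const_mul]
    simp
  rw [this]
  simp [eq_div_iff, Nat.factorial_ne_zero]
  ring

-- analyticity
lemma analyticAt_cosh : AnalyticAt ℝ Real.cosh 0 := by
  have : Real.cosh = fun x => (Real.exp x + Real.exp (-x)) / 2 := funext Real.cosh_eq
  rw [this]
  exact ((analyticAt_rexp.add (analyticAt_rexp.comp analyticAt_id.neg)).div analyticAt_const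
    (by norm_num))

lemma analyticAt_sinh : AnalyticAt ℝ Real.sinh 0 := by
  have : Real.sinh = fun x => (Real.exp x - Real.exp (-x)) / 2 := funext Real.sinh_eq
  rw [this]
  exact ((analyticAt_rexp.sub (analyticAt_rexp.comp analyticAt_id.neg)).div analyticAt_const
    (by norm_num))

lemma analyticAt_sech : AnalyticAt ℝ (fun x => 1 / Real.cosh x) 0 :=
  analyticAt_const.div _root_.analyticAt_cosh (by simp)

lemma analyticAt_tanh : AnalyticAt ℝ Real.tanh 0 := by
  have : Real.tanh = fun x => Real.sinh x / Real.cosh x := funext Real.tanh_eq_sinh_div_cosh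
  rw [this]
  exact _root_.analyticAt_sinh.div _root_.analyticAt_cosh (by simp)

lemma analyticAt_e2p1 : AnalyticAt ℝ (fun x => Real.exp (2 * x) + 1) 0 :=
  (analyticAt_rexp.comp (analyticAt_const.mul analyticAt_id)).add analyticAt_const

-- tc of (f + const)
lemma iteratedDeriv_add_const {f : ℝ → ℝ} (c : ℝ) (n : ℕ) (hn : 0 < n) :
    iteratedDeriv n (fun x => f x + c) 0 = iteratedDeriv n f 0 := by
  simp only [← iteratedDerivWithin_univ]
  have : (fun x => f x + c) = (fun x => c + f x) := by funext x; ring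
  rw [this]
  exact iteratedDerivWithin_const_add hn c

lemma tc_add_const {f : ℝ → ℝ} (c : ℝ) (n : ℕ) :
    tc (fun x => f x + c) n = tc f n + (if n = 0 then c else 0) := by
  rcases Nat.eq_zero_or_pos n with h | h
  · subst h; simp [tc]
  · simp [tc, iteratedDeriv_add_const c n h, h.ne']

lemma PS_add_const (f : ℝ → ℝ) (c : ℝ) :
    PS (fun x => f x + c) = PS f + PowerSeries.C c := by
  ext n
  simp only [map_add, PS_coeff, tc_add_const, PowerSeries.coeff_C]

lemma rescale_X (a : ℝ) : rescale a (X : PowerSeries ℝ) = PowerSeries.C a * X := by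
  ext n
  rw [coeff_rescale, PowerSeries.coeff_X, PowerSeries.coeff_C_mul, PowerSeries.coeff_X]
  rcases eq_or_ne n 1 with h | h <;> simp [h]

-- pointwise tanh identity
lemma tanh_identity (x : ℝ) : Real.tanh x * (Real.exp (2 * x) + 1) = Real.exp (2 * x) - 1 := by
  rw [Real.tanh_eq_sinh_div_cosh, Real.sinh_eq, Real.cosh_eq]
  have h1 : Real.exp x ≠ 0 := Real.exp_ne_zero x
  have h2 : Real.exp x + Real.exp (-x) ≠ 0 := by positivity
  have e2 : Real.exp (2 * x) = Real.exp x * Real.exp x := by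
    rw [← Real.exp_add]; ring_nf
  have en : Real.exp (-x) = (Real.exp x)⁻¹ := by
    rw [← Real.exp_neg]
  field_simp [e2, en]
  rw [show x * 2 = 2 * x by ring, e2, en]
  linear_combination (-2 * Real.exp x) * mul_inv_cancel₀ h1

-- key formal power series identity
lemma X_mul_PS_tanh :
    X * PS Real.tanh = X - rescale (2:ℝ) (bernoulliPowerSeries ℝ)
      + rescale (4:ℝ) (bernoulliPowerSeries ℝ) := by
  set T := PS Real.tanh
  set E := rescale (2:ℝ) (PowerSeries.exp ℝ)
  set B2 := rescale (2:ℝ) (bernoulliPowerSeries ℝ)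
  set B4 := rescale (4:ℝ) (bernoulliPowerSeries ℝ)
  have hT : T * (E + 1) = E - 1 := by
    have h1 : PS (fun x => Real.tanh x * (Real.exp (2*x) + 1))
        = T * PS (fun x => Real.exp (2*x) + 1) := PS_mul analyticAt_tanh analyticAt_e2p1
    have h2 : PS (fun x => Real.exp (2*x) + 1) = E + 1 := by
      rw [PS_add_const (fun x => Real.exp (2*x)) 1, PS_exp_mul]
      simp [E]
    have h3 : PS (fun x => Real.exp (2*x) - 1) = E - 1 := by
      have : (fun x => Real.exp (2*x) - 1) = fun x => Real.exp (2*x) + (-1) := by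
        funext x; ring
      rw [this, PS_add_const (fun x => Real.exp (2*x)) (-1), PS_exp_mul]
      simp [E, sub_eq_add_neg]
    rw [← h2, ← h1]
    have : (fun x => Real.tanh x * (Real.exp (2*x) + 1)) = fun x => Real.exp (2*x) - 1 := by
      funext x; exact tanh_identity x
    rw [this, h3]
  have hB2 : B2 * (E - 1) = PowerSeries.C (2:ℝ) * X := by
    have := congrArg (rescale (2:ℝ)) (bernoulliPowerSeries_mul_exp_sub_one ℝ)
    rw [map_mul, map_sub, map_one, rescale_X] at this
    exact this
  have hB4 : B4 * (E * E - 1) = PowerSeries.C (4:ℝ) * X := by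
    have := congrArg (rescale (4:ℝ)) (bernoulliPowerSeries_mul_exp_sub_one ℝ)
    rw [map_mul, map_sub, map_one, rescale_X] at this
    have hEE : E * E = rescale (4:ℝ) (PowerSeries.exp ℝ) := by
      rw [exp_mul_exp_eq_exp_add]; norm_num
    rw [hEE]
    exact this
  have hC2 : (PowerSeries.C (2:ℝ) : PowerSeries ℝ) = 2 := by simp [map_ofNat]
  have hC4 : (PowerSeries.C (4:ℝ) : PowerSeries ℝ) = 4 := by simp [map_ofNat]
  rw [hC2] at hB2; rw [hC4] at hB4
  have hne : (E - 1) * (E + 1) ≠ 0 := by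
    apply mul_ne_zero
    · intro h
      have := congrArg (PowerSeries.coeff 1) h
      rw [map_sub, coeff_rescale, PowerSeries.coeff_exp, PowerSeries.coeff_one, map_zero] at this
      norm_num at this
    · intro h
      have := congrArg (PowerSeries.coeff 0) h
      rw [map_add, coeff_rescale, PowerSeries.coeff_exp, PowerSeries.coeff_one, map_zero] at this
      norm_num at this
  have key : (X * T - (X - B2 + B4)) * ((E - 1) * (E + 1)) = 0 := by
    linear_combination (X * (E - 1)) * hT + (E + 1) * hB2 - hB4
  rcases mul_eq_zero.1 key with h | h
  · linear_combination h
  · exact absurd h hne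

lemma tc_tanh (n : ℕ) : tc Real.tanh (2*n+1)
    = ((4:ℝ)^(2*n+2) - 2^(2*n+2)) * (bernoulli (2*n+2) : ℝ) / (Nat.factorial (2*n+2)) := by
  have h := congrArg (PowerSeries.coeff (2*n+2)) X_mul_PS_tanh
  have e1 : (2*n+2) = (2*n+1) + 1 := rfl
  rw [e1, coeff_succ_X_mul, PS_coeff] at h
  rw [map_add, map_sub, coeff_rescale, coeff_rescale, PowerSeries.coeff_X] at h
  have hb : (coeff (2*n+1+1)) (bernoulliPowerSeries ℝ)
      = (bernoulli (2*n+2) : ℝ) / ((2*n+2).factorial : ℝ) := by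
    rw [bernoulliPowerSeries, coeff_mk]
    push_cast [map_div₀]
    norm_num
  have h2 : (2*n+1+1 : ℕ) ≠ 1 := by omega
  rw [hb, if_neg h2] at h
  rw [h]
  have hne : ((2*n+2).factorial : ℝ) ≠ 0 := by positivity
  field_simp
  ring

lemma deriv_tanh : deriv Real.tanh = fun x => (1/Real.cosh x) * (1/Real.cosh x) := by
  funext x
  have hs := Real.hasDerivAt_sinh x
  have hc := Real.hasDerivAt_cosh x
  have h0 : Real.cosh x ≠ 0 := (Real.cosh_pos x).ne'
  have h := hs.div hc h0
  have e : (fun y => Real.sinh y / Real.cosh y) = Real.tanh :=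
    funext fun y => (Real.tanh_eq_sinh_div_cosh y).symm
  rw [show (Real.sinh / Real.cosh) = Real.tanh from e] at h
  rw [h.deriv]
  have := Real.cosh_sq_sub_sinh_sq x
  field_simp
  nlinarith [this]

lemma euler_odd {m : ℕ} (hm : Odd m) : eulerNumber m = 0 := by
  have hsym : (fun x : ℝ => 1 / Real.cosh (-x)) = (fun x : ℝ => 1 / Real.cosh x) := by
    funext x; rw [Real.cosh_neg]
  have h := iteratedDeriv_comp_neg m (fun x : ℝ => 1 / Real.cosh x) 0
  rw [show (fun x : ℝ => 1 / Real.cosh (-x)) = (fun x : ℝ => 1 / Real.cosh x) from hsym] at h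
  rw [neg_zero, hm.neg_one_pow] at h
  have : eulerNumber m = -eulerNumber m := by
    simpa [eulerNumber] using h
  linarith

lemma sum_even_only (F : ℕ → ℝ) (hF : ∀ j, Odd j → F j = 0) (n : ℕ) :
    ∑ j ∈ Finset.range (2*n+1), F j = ∑ l ∈ Finset.range (n+1), F (2*l) := by
  induction n with
  | zero => simp
  | succ n ih =>
      have e : 2*(n+1)+1 = (2*n+1+1)+1 := by ring
      rw [e, Finset.sum_range_succ, Finset.sum_range_succ, ih, Finset.sum_range_succ,
        hF (2*n+1) ⟨n, by ring⟩]
      have e2 : 2*n+1+1 = 2*(n+1) := by ring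
      rw [e2, add_zero, Finset.sum_range_succ, Finset.sum_range_succ]

lemma iteratedDeriv_eq_tc (f : ℝ → ℝ) (n : ℕ) :
    iteratedDeriv n f 0 = (n.factorial : ℝ) * tc f n := by
  rw [tc]
  field_simp

lemma euler_sum_eq (n : ℕ) :
    ∑ l ∈ Finset.range (n + 1),
        (Nat.choose (2*n) (2*l) : ℝ) * eulerNumber (2*l) * eulerNumber (2*n - 2*l)
      = ((2*n+1).factorial : ℝ) * tc Real.tanh (2*n+1) := by
  have hA : tc (fun x => (1/Real.cosh x) * (1/Real.cosh x)) (2*n)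
      = ∑ j ∈ Finset.range (2*n+1),
          tc (fun x : ℝ => 1/Real.cosh x) j * tc (fun x : ℝ => 1/Real.cosh x) (2*n - j) := by
    have h := congrArg (PowerSeries.coeff (2*n)) (PS_mul analyticAt_sech analyticAt_sech)
    rw [PowerSeries.coeff_mul, Finset.Nat.sum_antidiagonal_eq_sum_range_succ_mk] at h
    simp only [PS_coeff] at h
    exact h
  have h0 : iteratedDeriv (2*n+1) Real.tanh 0
      = iteratedDeriv (2*n) (fun x => (1/Real.cosh x) * (1/Real.cosh x)) 0 := by
    rw [iteratedDeriv_succ', deriv_tanh]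
  have hC : ∑ j ∈ Finset.range (2*n+1),
        (Nat.choose (2*n) j : ℝ) * eulerNumber j * eulerNumber (2*n - j)
      = ((2*n).factorial : ℝ) * ∑ j ∈ Finset.range (2*n+1),
          tc (fun x : ℝ => 1/Real.cosh x) j * tc (fun x : ℝ => 1/Real.cosh x) (2*n - j) := by
    rw [Finset.mul_sum]
    refine Finset.sum_congr rfl fun j hj => ?_
    have hj' : j ≤ 2*n := Nat.lt_succ_iff.1 (Finset.mem_range.1 hj)
    rw [Nat.cast_choose ℝ hj']
    rw [show eulerNumber j = iteratedDeriv j (fun x : ℝ => 1/Real.cosh x) 0 from rfl,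
      show eulerNumber (2*n-j) = iteratedDeriv (2*n-j) (fun x : ℝ => 1/Real.cosh x) 0 from rfl,
      iteratedDeriv_eq_tc, iteratedDeriv_eq_tc]
    have hf1 : (j.factorial : ℝ) ≠ 0 := by positivity
    have hf2 : ((2*n-j).factorial : ℝ) ≠ 0 := by positivity
    field_simp
  have hD : ∑ j ∈ Finset.range (2*n+1),
        (Nat.choose (2*n) j : ℝ) * eulerNumber j * eulerNumber (2*n - j)
      = ∑ l ∈ Finset.range (n+1),
        (Nat.choose (2*n) (2*l) : ℝ) * eulerNumber (2*l) * eulerNumber (2*n - 2*l) := by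
    refine sum_even_only _ (fun j hj => ?_) n
    rw [euler_odd hj]
    ring
  rw [← hD, hC, ← hA, ← iteratedDeriv_eq_tc, ← h0, iteratedDeriv_eq_tc]

lemma odd_hasSum (k : ℕ) (hk : k ≠ 0) :
    HasSum (fun m : ℕ => 1 / (2*(m:ℝ)+1) ^ (2*k))
      ((1 - ((2:ℝ)^(2*k))⁻¹) *
        ((-1:ℝ)^(k+1) * 2^(2*k-1) * π^(2*k) * bernoulli (2*k) / (2*k).factorial)) := by
  set Z : ℝ := (-1:ℝ)^(k+1) * 2^(2*k-1) * π^(2*k) * bernoulli (2*k) / (2*k).factorial with hZ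
  set g : ℕ → ℝ := fun m => 1/(m:ℝ)^(2*k) with hg
  have hz : HasSum g Z := hasSum_zeta_nat hk
  have heven : HasSum (fun m => g (2*m)) (((2:ℝ)^(2*k))⁻¹ * Z) := by
    have h2 := hz.mul_left ((2:ℝ)^(2*k))⁻¹
    have he : (fun m => g (2*m)) = fun m => ((2:ℝ)^(2*k))⁻¹ * g m := by
      funext m
      simp only [hg]
      push_cast
      rw [mul_pow, one_div, mul_inv, one_div]
    rw [he]
    exact h2
  have hso : Summable (fun m => g (2*m+1)) := by
    have hinj : Function.Injective (fun m : ℕ => 2*m+1) := by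
      intro a b h
      simp only at h
      omega
    exact hz.summable.comp_injective hinj
  obtain ⟨t, ht⟩ := hso
  have hu : ((2:ℝ)^(2*k))⁻¹ * Z + t = Z := (heven.even_add_odd ht).unique hz
  have htval : t = (1 - ((2:ℝ)^(2*k))⁻¹) * Z := by ring_nf; ring_nf at hu; linarith
  rw [← htval]
  have he2 : (fun m : ℕ => 1 / (2*(m:ℝ)+1) ^ (2*k)) = fun m => g (2*m+1) := by
    funext m
    simp only [hg]
    push_cast
    ring_nf
  rw [he2]
  exact ht

/-- `∑_{k=0}^∞ 1/(2k+1)^{2n+2}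
  = (-1)^n (π/2)^{2n+2} (1/2) (1/(2n+1)!) ∑_{l=0}^n C(2n,2l) E_{2l} E_{2n-2l}`. -/
theorem odd_power_sum_eq_euler (n : ℕ) :
    ∑' k : ℕ, 1 / (2 * (k : ℝ) + 1) ^ (2 * n + 2)
      = (-1) ^ n * (π / 2) ^ (2 * n + 2) * (1 / 2) * (1 / (Nat.factorial (2 * n + 1) : ℝ)) *
        ∑ l ∈ Finset.range (n + 1),
          (Nat.choose (2 * n) (2 * l) : ℝ) * eulerNumber (2 * l) * eulerNumber (2 * n - 2 * l) := by
  have h1 := odd_hasSum (n+1) (Nat.succ_ne_zero n)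
  have e : 2*(n+1) = 2*n+2 := by ring
  rw [e] at h1
  rw [h1.tsum_eq, euler_sum_eq n, tc_tanh n]
  have h4 : (4:ℝ)^(2*n+2) = 2^(2*n+2) * 2^(2*n+2) := by
    rw [show (4:ℝ) = 2*2 by norm_num, mul_pow]
  have hdiv : (π/2)^(2*n+2) = π^(2*n+2) / 2^(2*n+2) := div_pow π 2 _
  have hsub : 2*n+2-1 = 2*n+1 := by omega
  have hpow : (2:ℝ)^(2*n+2) = 2^(2*n+1) * 2 := by rw [← pow_succ]
  have hsgn : (-1:ℝ)^(n+1+1) = (-1:ℝ)^n := by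
    rw [pow_succ, pow_succ]; ring
  rw [hsub, hsgn, h4, hdiv, hpow]
  have h2s : (2:ℝ)^(2*n+1) ≠ 0 := by positivity
  have hfac1 : ((2*n+1).factorial : ℝ) ≠ 0 := by positivity
  have hfac2 : ((2*n+2).factorial : ℝ) ≠ 0 := by positivity
  field_simp
end
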